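/- arXiv:2504.11738 — 8 statements merged into one kernel-verified Lean document; each statement's English description precedes it below -/
import Mathlib

section
/- Let δ > 0, a_* > 0 and θ₁ ∈ (1,2). Let S ⊆ ℝ and let f : ℝ × ℝ → ℝ be such that v ↦ f(t,v) is continuous on ℝ for each t ∈ S, and assume that for all t ∈ S: F(t,v) ≥ 0 for |v| ≤ δ, v·f(t,v) − 2F(t,v) < 0 for 0 < |v| ≤ δ, and F(t,v) ≥ a_*|v|^{θ₁} for |v| ≤ δ, where F(t,v) = ∫₀^v f(t,s) ds. Define F̃(t,v) = m(v)·F(t,v) + (1 − m(v))·a_*|v|^{θ₁} and f̃(t,v) = m'(v)·(F(t,v) − a_*|v|^{θ₁}) + m(v)·f(t,v) + a_*θ₁(1 − m(v))|v|^{θ₁−2}v (with |v|^{θ₁−2}v = 0 at v = 0). Then F̃(t,v) ≥ 0 for all t ∈ S and v ∈ ℝ, and v·f̃(t,v) − 2F̃(t,v) < 0 for all t ∈ S and all v ∈ ℝ with v ≠ 0. -/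
open Set MeasureTheory Real

theorem stmt1
    (δ astar θ₁ : ℝ) (hδ : 0 < δ) (ha : 0 < astar) (hθ₁ : 1 < θ₁) (hθ₂ : θ₁ < 2)
    (S : Set ℝ) (f : ℝ → ℝ → ℝ)
    (hf_cont : ∀ t ∈ S, Continuous (f t))
    (F : ℝ → ℝ → ℝ) (hF : ∀ t v, F t v = ∫ s in (0:ℝ)..v, f t s)
    (hF_nonneg : ∀ t ∈ S, ∀ v : ℝ, |v| ≤ δ → 0 ≤ F t v)
    (hsub : ∀ t ∈ S, ∀ v : ℝ, 0 < |v| → |v| ≤ δ → v * f t v - 2 * F t v < 0)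
    (hF_lower : ∀ t ∈ S, ∀ v : ℝ, |v| ≤ δ → astar * |v| ^ θ₁ ≤ F t v)
    (m : ℝ → ℝ) (hm : ContDiff ℝ 1 m)
    (hm_even : ∀ s : ℝ, m (-s) = m s)
    (hm_range : ∀ s : ℝ, m s ∈ Icc (0:ℝ) 1)
    (hm_one : ∀ s : ℝ, |s| ≤ δ/2 → m s = 1)
    (hm_zero : ∀ s : ℝ, δ ≤ |s| → m s = 0)
    (hm_sign : ∀ s : ℝ, s * deriv m s ≤ 0)
    (hm_anti : StrictAntiOn m (Ioo (δ/2) δ))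
    (Ftilde : ℝ → ℝ → ℝ)
    (hFt : ∀ t v, Ftilde t v = m v * F t v + (1 - m v) * astar * |v| ^ θ₁)
    (ftilde : ℝ → ℝ → ℝ)
    (hft : ∀ t v, ftilde t v =
      deriv m v * (F t v - astar * |v| ^ θ₁) + m v * f t v
        + astar * θ₁ * (1 - m v) * (|v| ^ (θ₁ - 2)) * v) :
    ∀ t ∈ S, ∀ v : ℝ,
      0 ≤ Ftilde t v ∧ (v ≠ 0 → v * ftilde t v - 2 * Ftilde t v < 0) := by

  intro t ht v
  have hD : (0:ℝ) ≤ |v| ^ θ₁ := Real.rpow_nonneg (abs_nonneg v) _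
  constructor
  · rw [hFt]
    by_cases hv : |v| ≤ δ
    · have h1 := hF_nonneg t ht v hv
      have h2 := (hm_range v).1
      have h3 := (hm_range v).2
      nlinarith [mul_nonneg h2 h1, mul_nonneg (mul_nonneg (by linarith : (0:ℝ) ≤ 1 - m v) ha.le) hD]
    · have hm0 : m v = 0 := hm_zero v (le_of_not_ge hv)
      rw [hm0]
      nlinarith [mul_nonneg ha.le hD]
  · intro hv0
    have hva : 0 < |v| := abs_pos.2 hv0
    have hpow : |v| ^ (θ₁ - 2) * v * v = |v| ^ θ₁ := by
      have h1 : v * v = |v| ^ (2:ℝ) := by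
        rw [show ((2:ℝ)) = ((2:ℕ):ℝ) by norm_num, Real.rpow_natCast]
        rw [sq_abs]; ring
      rw [mul_assoc, h1, ← Real.rpow_add hva]
      ring_nf
    have key : v * ftilde t v - 2 * Ftilde t v =
        v * deriv m v * (F t v - astar * |v| ^ θ₁)
          + m v * (v * f t v - 2 * F t v)
          + astar * (1 - m v) * (θ₁ - 2) * (|v| ^ θ₁) := by
      rw [hft, hFt]
      linear_combination (astar * θ₁ * (1 - m v)) * hpow
    rw [key]
    have hDpos : (0:ℝ) < |v| ^ θ₁ := Real.rpow_pos_of_pos hva _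
    by_cases hv : |v| ≤ δ
    · have hB : astar * |v| ^ θ₁ ≤ F t v := hF_lower t ht v hv
      have hA : v * deriv m v ≤ 0 := hm_sign v
      have hC : v * f t v - 2 * F t v < 0 := hsub t ht v hva hv
      have h2 := (hm_range v).1
      have h3 := (hm_range v).2
      have hAB : v * deriv m v * (F t v - astar * |v| ^ θ₁) ≤ 0 :=
        mul_nonpos_of_nonpos_of_nonneg hA (by linarith)
      by_cases hm0 : m v = 0
      · rw [hm0]; nlinarith [mul_pos ha hDpos]
      · have hmp : 0 < m v := lt_of_le_of_ne h2 (Ne.symm hm0)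
        nlinarith [mul_neg_of_pos_of_neg hmp hC,
          mul_nonneg (mul_nonneg ha.le (by linarith : (0:ℝ) ≤ 1 - m v)) hDpos.le]
    · have hm0 : m v = 0 := hm_zero v (le_of_not_ge hv)
      have hd0 : deriv m v = 0 := by
        have hopen : IsOpen {s : ℝ | δ < |s|} := isOpen_lt continuous_const continuous_abs
        have hmem : v ∈ {s : ℝ | δ < |s|} := lt_of_not_ge hv
        have heq : m =ᶠ[nhds v] (fun _ => (0:ℝ)) :=
          Filter.eventuallyEq_of_mem (hopen.mem_nhds hmem) (fun s hs => hm_zero s (le_of_lt hs))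
        rw [heq.deriv_eq, deriv_const]
      rw [hm0, hd0]
      nlinarith [mul_pos ha hDpos]
end

section
/- Let δ > 0, θ₁ ∈ (1,2), a₁ > 0 and 0 < a_* < a₁/θ₁. Let S ⊆ ℝ and let f : ℝ × ℝ → ℝ be such that v ↦ f(t,v) is continuous on ℝ for each t ∈ S and |f(t,v)| ≤ a₁|v|^{θ₁−1} for all t ∈ S and |v| ≤ δ. Set F(t,v) = ∫₀^v f(t,s) ds and f̃(t,v) = m'(v)·(F(t,v) − a_*|v|^{θ₁}) + m(v)·f(t,v) + a_*θ₁(1 − m(v))|v|^{θ₁−2}v (with |v|^{θ₁−2}v = 0 at v = 0). Then there exists a constant A₁ > 0 such that |f̃(t,v)| ≤ A₁|v|^{θ₁−1} for all t ∈ S and all v ∈ ℝ. -/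
open Set MeasureTheory Real

theorem stmt2
    (δ a₁ astar θ₁ : ℝ) (hδ : 0 < δ) (ha₁ : 0 < a₁) (hθ₁ : 1 < θ₁) (hθ₂ : θ₁ < 2)
    (hastar : 0 < astar) (hastar' : astar < a₁ / θ₁)
    (S : Set ℝ) (f : ℝ → ℝ → ℝ)
    (hf_cont : ∀ t ∈ S, Continuous (f t))
    (hf_bound : ∀ t ∈ S, ∀ v : ℝ, |v| ≤ δ → |f t v| ≤ a₁ * |v| ^ (θ₁ - 1))
    (m : ℝ → ℝ) (hm : ContDiff ℝ 1 m)
    (hm_even : ∀ s : ℝ, m (-s) = m s)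
    (hm_range : ∀ s : ℝ, m s ∈ Icc (0:ℝ) 1)
    (hm_one : ∀ s : ℝ, |s| ≤ δ/2 → m s = 1)
    (hm_zero : ∀ s : ℝ, δ ≤ |s| → m s = 0)
    (hm_sign : ∀ s : ℝ, s * deriv m s ≤ 0)
    (hm_anti : StrictAntiOn m (Ioo (δ/2) δ))
    (F : ℝ → ℝ → ℝ) (hF : ∀ t v, F t v = ∫ s in (0:ℝ)..v, f t s)
    (ftilde : ℝ → ℝ → ℝ)
    (hft : ∀ t v, ftilde t v =
      deriv m v * (F t v - astar * |v| ^ θ₁) + m v * f t v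
        + astar * θ₁ * (1 - m v) * (|v| ^ (θ₁ - 2)) * v) :
    ∃ A₁ : ℝ, 0 < A₁ ∧ ∀ t ∈ S, ∀ v : ℝ, |ftilde t v| ≤ A₁ * |v| ^ (θ₁ - 1) := by
  -- deriv m vanishes for |x| ≥ δ
  have hderiv0 : ∀ x : ℝ, δ ≤ |x| → deriv m x = 0 := by
    intro x hx
    have hmin : IsLocalMin m x := Filter.Eventually.of_forall fun y => by
      rw [hm_zero x hx]; exact (hm_range y).1
    exact hmin.deriv_eq_zero
  -- bound on deriv m
  obtain ⟨M, hM⟩ : ∃ M : ℝ, ∀ x : ℝ, |deriv m x| ≤ M := by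
    have hc : Continuous (deriv m) := hm.continuous_deriv le_rfl
    have hs : HasCompactSupport (deriv m) := by
      apply HasCompactSupport.intro (isCompact_Icc (a := -δ) (b := δ))
      intro x hx
      apply hderiv0
      rcases abs_cases x with ⟨h1, _⟩ | ⟨h1, _⟩ <;>
        simp only [mem_Icc, not_and_or, not_le] at hx <;> rcases hx with h | h <;> linarith
    obtain ⟨C, hC⟩ := hs.exists_bound_of_continuous hc
    exact ⟨C, fun x => hC x⟩
  have hM0 : 0 ≤ M := le_trans (abs_nonneg _) (hM 0)
  -- |v|^(θ₁-2) * v has absolute value |v|^(θ₁-1)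
  have habs : ∀ v : ℝ, |(|v| ^ (θ₁ - 2) * v)| = |v| ^ (θ₁ - 1) := by
    intro v
    rcases eq_or_ne v 0 with rfl | hv
    · simp [Real.zero_rpow (show θ₁ - 1 ≠ 0 by intro h; linarith [h])]
    · have h1 : |v| ^ (θ₁ - 2) ≥ 0 := Real.rpow_nonneg (abs_nonneg v) _
      rw [abs_mul, abs_of_nonneg h1, ← Real.rpow_add_one (abs_ne_zero.mpr hv)]
      ring_nf
  -- |v|^θ₁ = |v|^(θ₁-1) * |v|
  have hpow : ∀ v : ℝ, |v| ^ θ₁ = |v| ^ (θ₁ - 1) * |v| := by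
    intro v
    rcases eq_or_ne v 0 with rfl | hv
    · simp [Real.zero_rpow (show θ₁ ≠ 0 by intro h; linarith [h]),
        Real.zero_rpow (show θ₁ - 1 ≠ 0 by intro h; linarith [h])]
    · rw [← Real.rpow_add_one (abs_ne_zero.mpr hv)]; ring_nf
  refine ⟨M * δ * (a₁ + astar) + a₁ + astar * θ₁, by positivity, ?_⟩
  intro t ht v
  have hrnn : (0:ℝ) ≤ |v| ^ (θ₁ - 1) := Real.rpow_nonneg (abs_nonneg v) _
  rcases le_or_gt (|v|) δ with hvδ | hvδ
  · -- small v
    -- F bound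
    have hFb : |F t v| ≤ a₁ * |v| ^ (θ₁ - 1) * |v| := by
      rw [hF]
      have hle : ∀ x ∈ Set.uIoc (0:ℝ) v, ‖f t x‖ ≤ a₁ * |v| ^ (θ₁ - 1) := by
        intro x hx
        have hxv : |x| ≤ |v| := by
          refine abs_le.mpr ⟨?_, le_trans hx.2 (max_le (abs_nonneg v) (le_abs_self v))⟩
          exact le_trans (le_min (neg_nonpos_of_nonneg (abs_nonneg v)) (neg_abs_le v)) hx.1.le
        calc ‖f t x‖ ≤ a₁ * |x| ^ (θ₁ - 1) := hf_bound t ht x (le_trans hxv hvδ)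
          _ ≤ a₁ * |v| ^ (θ₁ - 1) :=
              mul_le_mul_of_nonneg_left
                (Real.rpow_le_rpow (abs_nonneg x) hxv (by linarith)) ha₁.le
      have := intervalIntegral.norm_integral_le_of_norm_le_const hle
      simpa using this
    have hfb : |f t v| ≤ a₁ * |v| ^ (θ₁ - 1) := hf_bound t ht v hvδ
    have hm1 : 0 ≤ m v := (hm_range v).1
    have hm2 : m v ≤ 1 := (hm_range v).2
    have h1 : |deriv m v * (F t v - astar * |v| ^ θ₁)| ≤ M * δ * (a₁ + astar) * |v| ^ (θ₁ - 1) := by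
      rw [abs_mul]
      have h2 : |F t v - astar * |v| ^ θ₁| ≤ (a₁ + astar) * (|v| ^ (θ₁ - 1) * |v|) := by
        have h3 : |astar * |v| ^ θ₁| = astar * (|v| ^ (θ₁ - 1) * |v|) := by
          rw [abs_mul, abs_of_pos hastar, abs_of_nonneg (Real.rpow_nonneg (abs_nonneg v) _), hpow]
        calc |F t v - astar * |v| ^ θ₁| ≤ |F t v| + |astar * |v| ^ θ₁| := abs_sub _ _
          _ ≤ a₁ * |v| ^ (θ₁ - 1) * |v| + astar * (|v| ^ (θ₁ - 1) * |v|) := by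
              rw [h3]; gcongr
          _ = (a₁ + astar) * (|v| ^ (θ₁ - 1) * |v|) := by ring
      calc |deriv m v| * |F t v - astar * |v| ^ θ₁|
          ≤ M * ((a₁ + astar) * (|v| ^ (θ₁ - 1) * |v|)) := by
            apply mul_le_mul (hM v) h2 (abs_nonneg _) hM0
        _ ≤ M * ((a₁ + astar) * (|v| ^ (θ₁ - 1) * δ)) := by gcongr
        _ = M * δ * (a₁ + astar) * |v| ^ (θ₁ - 1) := by ring
    have h2 : |m v * f t v| ≤ a₁ * |v| ^ (θ₁ - 1) := by
      rw [abs_mul, abs_of_nonneg hm1]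
      calc m v * |f t v| ≤ 1 * (a₁ * |v| ^ (θ₁ - 1)) :=
            mul_le_mul hm2 hfb (abs_nonneg _) one_pos.le
        _ = a₁ * |v| ^ (θ₁ - 1) := one_mul _
    have h3 : |astar * θ₁ * (1 - m v) * (|v| ^ (θ₁ - 2)) * v| ≤ astar * θ₁ * |v| ^ (θ₁ - 1) := by
      have : astar * θ₁ * (1 - m v) * (|v| ^ (θ₁ - 2)) * v
          = (astar * θ₁ * (1 - m v)) * (|v| ^ (θ₁ - 2) * v) := by ring
      rw [this, abs_mul, habs]
      have h4 : |astar * θ₁ * (1 - m v)| ≤ astar * θ₁ := by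
        rw [abs_mul]
        have : |astar * θ₁| = astar * θ₁ := abs_of_pos (by positivity)
        rw [this]
        nth_rewrite 2 [show astar * θ₁ = astar * θ₁ * 1 by ring]
        gcongr
        rw [abs_le]; constructor <;> linarith
      gcongr
    calc |ftilde t v| ≤ |deriv m v * (F t v - astar * |v| ^ θ₁)| + |m v * f t v|
          + |astar * θ₁ * (1 - m v) * (|v| ^ (θ₁ - 2)) * v| := by
          rw [hft]; exact (abs_add_le _ _).trans (by gcongr; exact abs_add_le _ _)
      _ ≤ M * δ * (a₁ + astar) * |v| ^ (θ₁ - 1) + a₁ * |v| ^ (θ₁ - 1)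
          + astar * θ₁ * |v| ^ (θ₁ - 1) := by gcongr
      _ = (M * δ * (a₁ + astar) + a₁ + astar * θ₁) * |v| ^ (θ₁ - 1) := by ring
  · -- large v
    have hd0 : deriv m v = 0 := hderiv0 v hvδ.le
    have hm0 : m v = 0 := hm_zero v hvδ.le
    rw [hft, hd0, hm0]
    simp only [zero_mul, zero_add, sub_zero, mul_one, add_zero]
    have : astar * θ₁ * |v| ^ (θ₁ - 2) * v = (astar * θ₁) * (|v| ^ (θ₁ - 2) * v) := by ring
    rw [this, abs_mul, habs, abs_of_pos (by positivity : (0:ℝ) < astar * θ₁)]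
    have h5 : (0:ℝ) ≤ M * δ * (a₁ + astar) + a₁ := by positivity
    nlinarith [mul_nonneg h5 hrnn]
end

section
/- Let δ > 0, N ≥ 1, let w₁, …, w_N be positive real numbers, and let I₁, …, I_N : ℝ → ℝ be continuous functions such that for each i: Iᵢ(−v) = −Iᵢ(v) for |v| ≤ δ and Iᵢ(v) ≥ 0 for v ∈ [0,δ]; and assume that 2·∑_{i=1}^N wᵢ ∫₀^v Iᵢ(s) ds ≥ ∑_{i=1}^N wᵢ·Iᵢ(v)·v for all |v| ≤ δ. Then 2·∑_{i=1}^N wᵢ ∫₀^v m(s)·Iᵢ(s) ds ≥ ∑_{i=1}^N wᵢ·m(v)·Iᵢ(v)·v for every v ∈ ℝ. -/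
open Set MeasureTheory Real

/-!
With `J = ∑ i, w i • I i` everything reduces to one function. For `0 ≤ v ≤ δ`, the sign
condition `s m'(s) ≤ 0` makes `m` nonincreasing on `[0, ∞)`, and `J ≥ 0` on `[0, v]`, so
`m v * ∫₀^v J ≤ ∫₀^v m J`; multiplying the hypothesis by `m v ≥ 0` gives the claim. For `v > δ`
the left side vanishes while `m J ≥ 0` on `[0, v]`. Negative `v` reduce to positive ones because
`m J` is odd on all of `ℝ` (`m` vanishes wherever `J` is not known to be odd), which makes both
sides even in `v`.
-/

theorem Function.Odd.intervalIntegral_zero_neg {E : Type*} [NormedAddCommGroup E]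
    [NormedSpace ℝ E] {f : ℝ → E} (hf : f.Odd) (v : ℝ) :
    ∫ s in (0 : ℝ)..-v, f s = ∫ s in (0 : ℝ)..v, f s := by
  have h := intervalIntegral.integral_comp_neg (a := 0) (b := v) f
  simp only [hf _, intervalIntegral.integral_neg, neg_zero] at h
  rw [intervalIntegral.integral_symm (-v) 0, ← h, neg_neg]

theorem antitoneOn_Ici_of_mul_deriv_nonpos {m : ℝ → ℝ} (hm : Differentiable ℝ m)
    (hm_sign : ∀ s, s * deriv m s ≤ 0) : AntitoneOn m (Ici 0) :=
  antitoneOn_of_deriv_nonpos (convex_Ici 0) hm.continuous.continuousOn hm.differentiableOn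
    fun s hs => by
      rw [interior_Ici] at hs
      exact nonpos_of_mul_nonpos_right (hm_sign s) hs

theorem sum_mul_intervalIntegral {ι : Type*} (t : Finset ι) (w : ι → ℝ) {f : ι → ℝ → ℝ}
    {a b : ℝ} (hf : ∀ i ∈ t, IntervalIntegrable (f i) volume a b) :
    ∑ i ∈ t, w i * ∫ x in a..b, f i x = ∫ x in a..b, ∑ i ∈ t, w i * f i x := by
  rw [intervalIntegral.integral_finsetSum fun i hi => (hf i hi).const_mul (w i)]
  simp_rw [intervalIntegral.integral_const_mul]

theorem Function.Even.odd_mul_of_odd_on {m J : ℝ → ℝ} {δ : ℝ} (hm_even : m.Even)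
    (hm_zero : ∀ s, δ ≤ |s| → m s = 0) (hJ_odd : ∀ s, |s| ≤ δ → J (-s) = -J s) :
    Function.Odd fun s => m s * J s := by
  intro s
  show m (-s) * J (-s) = -(m s * J s)
  rcases le_total |s| δ with hs | hs
  · rw [hm_even s, hJ_odd s hs, mul_neg]
  · rw [hm_zero s hs, hm_zero (-s) (by rwa [abs_neg]), zero_mul, zero_mul, neg_zero]

section

variable {m J : ℝ → ℝ} {δ : ℝ}

theorem mul_mul_le_two_integral_of_nonneg (hm : Continuous m) (hm_nonneg : ∀ s, 0 ≤ m s)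
    (hm_anti : AntitoneOn m (Ici 0)) (hm_zero : ∀ s, δ ≤ s → m s = 0) (hJ : Continuous J)
    (hJ_nonneg : ∀ s ∈ Icc 0 δ, 0 ≤ J s)
    (hJ_ineq : ∀ v ∈ Icc 0 δ, v * J v ≤ 2 * ∫ s in (0 : ℝ)..v, J s) {v : ℝ} (hv : 0 ≤ v) :
    v * (m v * J v) ≤ 2 * ∫ s in (0 : ℝ)..v, m s * J s := by
  rcases le_or_gt v δ with hvδ | hδv
  · have hmono : ∫ s in (0 : ℝ)..v, m v * J s ≤ ∫ s in (0 : ℝ)..v, m s * J s :=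
      intervalIntegral.integral_mono_on hv ((hJ.const_mul _).intervalIntegrable _ _)
        ((hm.mul hJ).intervalIntegrable _ _) fun s hs =>
          mul_le_mul_of_nonneg_right (hm_anti hs.1 hv hs.2) (hJ_nonneg s ⟨hs.1, hs.2.trans hvδ⟩)
    calc v * (m v * J v) = m v * (v * J v) := by ring
      _ ≤ m v * (2 * ∫ s in (0 : ℝ)..v, J s) :=
          mul_le_mul_of_nonneg_left (hJ_ineq v ⟨hv, hvδ⟩) (hm_nonneg v)
      _ = 2 * ∫ s in (0 : ℝ)..v, m v * J s := by rw [intervalIntegral.integral_const_mul]; ring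
      _ ≤ 2 * ∫ s in (0 : ℝ)..v, m s * J s := by linarith
  · have hint : 0 ≤ ∫ s in (0 : ℝ)..v, m s * J s :=
      intervalIntegral.integral_nonneg hv fun s hs => by
        rcases le_or_gt s δ with hsδ | hδs
        · exact mul_nonneg (hm_nonneg s) (hJ_nonneg s ⟨hs.1, hsδ⟩)
        · rw [hm_zero s hδs.le, zero_mul]
    rw [hm_zero v hδv.le, zero_mul, mul_zero]
    linarith

theorem mul_mul_le_two_integral (hm : Differentiable ℝ m) (hm_sign : ∀ s, s * deriv m s ≤ 0)
    (hm_even : m.Even) (hm_nonneg : ∀ s, 0 ≤ m s) (hm_zero : ∀ s, δ ≤ |s| → m s = 0)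
    (hJ : Continuous J) (hJ_odd : ∀ s, |s| ≤ δ → J (-s) = -J s)
    (hJ_nonneg : ∀ s ∈ Icc 0 δ, 0 ≤ J s)
    (hJ_ineq : ∀ v ∈ Icc 0 δ, v * J v ≤ 2 * ∫ s in (0 : ℝ)..v, J s) (v : ℝ) :
    v * (m v * J v) ≤ 2 * ∫ s in (0 : ℝ)..v, m s * J s := by
  have hpos {u : ℝ} (hu : 0 ≤ u) := mul_mul_le_two_integral_of_nonneg hm.continuous hm_nonneg
    (antitoneOn_Ici_of_mul_deriv_nonpos hm hm_sign)
    (fun s hs => hm_zero s (hs.trans (le_abs_self s))) hJ hJ_nonneg hJ_ineq hu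
  rcases le_total 0 v with hv | hv
  · exact hpos hv
  · have hodd := hm_even.odd_mul_of_odd_on hm_zero hJ_odd
    have h := hpos (neg_nonneg.2 hv)
    rwa [show m (-v) * J (-v) = -(m v * J v) from hodd v, hodd.intervalIntegral_zero_neg,
      neg_mul_neg] at h

end

theorem stmt4_general
    (δ : ℝ)
    (N : ℕ)
    (w : Fin N → ℝ) (hw : ∀ i, 0 < w i)
    (I : Fin N → ℝ → ℝ) (hI_cont : ∀ i, Continuous (I i))
    (hI_odd : ∀ i, ∀ v : ℝ, |v| ≤ δ → I i (-v) = - I i v)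
    (hI_nonneg : ∀ i, ∀ v ∈ Icc (0:ℝ) δ, 0 ≤ I i v)
    (hI_ineq : ∀ v : ℝ, |v| ≤ δ →
      (∑ i, w i * (I i v) * v) ≤ 2 * ∑ i, w i * ∫ s in (0:ℝ)..v, I i s)
    (m : ℝ → ℝ) (hm : ContDiff ℝ 1 m)
    (hm_even : ∀ s : ℝ, m (-s) = m s)
    (hm_range : ∀ s : ℝ, m s ∈ Icc (0:ℝ) 1)
    (hm_zero : ∀ s : ℝ, δ ≤ |s| → m s = 0)
    (hm_sign : ∀ s : ℝ, s * deriv m s ≤ 0) :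
    ∀ v : ℝ, (∑ i, w i * (m v * I i v) * v)
      ≤ 2 * ∑ i, w i * ∫ s in (0:ℝ)..v, m s * I i s := by
  set J : ℝ → ℝ := fun s => ∑ i, w i * I i s
  have hJ : Continuous J := continuous_finsetSum _ fun i _ => continuous_const.mul (hI_cont i)
  have hsum_mul (c u : ℝ) : ∑ i, w i * (c * I i u) * u = u * (c * J u) := by
    simp only [J, Finset.mul_sum]
    exact Finset.sum_congr rfl fun i _ => by ring
  have hsum_int {f : ℝ → ℝ} (hf : Continuous f) (u : ℝ) :
      ∑ i, w i * ∫ s in (0 : ℝ)..u, f s * I i s = ∫ s in (0 : ℝ)..u, f s * J s := by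
    rw [sum_mul_intervalIntegral (f := fun i s => f s * I i s) _ _
      fun i _ => (hf.mul (hI_cont i)).intervalIntegrable _ _]
    simp only [J, Finset.mul_sum]
    exact intervalIntegral.integral_congr fun s _ => Finset.sum_congr rfl fun i _ => by ring
  intro v
  rw [hsum_mul, hsum_int hm.continuous]
  refine mul_mul_le_two_integral (hm.differentiable one_ne_zero) hm_sign hm_even
    (fun s => (hm_range s).1) hm_zero hJ (fun s hs => ?_) (fun s hs => ?_) (fun u hu => ?_) v
  · simp only [J, hI_odd _ s hs, mul_neg, Finset.sum_neg_distrib]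
  · exact Finset.sum_nonneg fun i _ => mul_nonneg (hw i).le (hI_nonneg i s hs)
  · have h := hI_ineq u (abs_le.2 ⟨by linarith [hu.1, hu.2], hu.2⟩)
    have hL := hsum_mul 1 u
    have hR := hsum_int (f := fun _ => 1) continuous_const u
    simp only [one_mul] at hL hR
    rwa [hL, hR] at h

theorem stmt4
    (δ : ℝ) (hδ : 0 < δ)
    (N : ℕ) (hN : 1 ≤ N)
    (w : Fin N → ℝ) (hw : ∀ i, 0 < w i)
    (I : Fin N → ℝ → ℝ) (hI_cont : ∀ i, Continuous (I i))
    (hI_odd : ∀ i, ∀ v : ℝ, |v| ≤ δ → I i (-v) = - I i v)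
    (hI_nonneg : ∀ i, ∀ v ∈ Icc (0:ℝ) δ, 0 ≤ I i v)
    (hI_ineq : ∀ v : ℝ, |v| ≤ δ →
      (∑ i, w i * (I i v) * v) ≤ 2 * ∑ i, w i * ∫ s in (0:ℝ)..v, I i s)
    (m : ℝ → ℝ) (hm : ContDiff ℝ 1 m)
    (hm_even : ∀ s : ℝ, m (-s) = m s)
    (hm_range : ∀ s : ℝ, m s ∈ Icc (0:ℝ) 1)
    (hm_one : ∀ s : ℝ, |s| ≤ δ/2 → m s = 1)
    (hm_zero : ∀ s : ℝ, δ ≤ |s| → m s = 0)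
    (hm_sign : ∀ s : ℝ, s * deriv m s ≤ 0)
    (hm_anti : StrictAntiOn m (Ioo (δ/2) δ)) :
    ∀ v : ℝ, (∑ i, w i * (m v * I i v) * v)
      ≤ 2 * ∑ i, w i * ∫ s in (0:ℝ)..v, m s * I i s :=
  stmt4_general δ N w hw I hI_cont hI_odd hI_nonneg hI_ineq m hm hm_even hm_range hm_zero hm_sign
end

section
/- Let T > 0 and let u : ℝ → ℝ be twice continuously differentiable on [0,T] with u(0) = u(T) = u'(0) = u'(T) = 0. Then (∫₀^T |u(t)|² dt)^{1/2} ≤ (T²/(2√2))·(∫₀^T |u''(t)|² dt)^{1/2} and (∫₀^T |u'(t)|² dt)^{1/2} ≤ (T/√2)·(∫₀^T |u''(t)|² dt)^{1/2}. -/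
/-!
Both inequalities come from the one-dimensional Poincaré inequality: if `v` vanishes at one
end of an interval of length `L`, then the fundamental theorem of calculus and Cauchy–Schwarz
give `v(t)² ≤ (distance of t to that end) · ∫ v'²`, and integrating yields
`∫ v² ≤ L²/2 · ∫ v'²`. Applied to `u'` (which vanishes at `0`) this is the second inequality.
If `v` vanishes at both ends, applying the one-sided bound on each half of the interval
improves the constant to `L²/8`; for `v = u` this gives `∫ u² ≤ T²/8 · ∫ u'² ≤ T⁴/16 · ∫ u''²`,
stronger than the first inequality.
-/

open Set MeasureTheory Real intervalIntegral

theorem sq_integral_le_mul_integral_sq {f : ℝ → ℝ} {a b : ℝ} (hab : a ≤ b)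
    (hf : IntervalIntegrable f volume a b)
    (hf2 : IntervalIntegrable (fun x => f x ^ 2) volume a b) :
    (∫ x in a..b, f x) ^ 2 ≤ (b - a) * ∫ x in a..b, f x ^ 2 := by
  set I := ∫ x in a..b, f x
  set J := ∫ x in a..b, f x ^ 2
  rcases hab.eq_or_lt with rfl | hlt
  · simp [I]
  have hvar : 0 ≤ ∫ x in a..b, ((b - a) * f x - I) ^ 2 :=
    integral_nonneg hab fun _ _ => sq_nonneg _
  have hexpand : ∫ x in a..b, ((b - a) * f x - I) ^ 2
      = (b - a) * ((b - a) * J - I ^ 2) := by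
    have hpoly : (fun x => ((b - a) * f x - I) ^ 2)
        = fun x => (b - a) ^ 2 * f x ^ 2 - 2 * (b - a) * I * f x + I ^ 2 := by
      funext x; ring
    rw [hpoly, integral_add (hf2.const_mul _ |>.sub (hf.const_mul _)) intervalIntegrable_const,
      integral_sub (hf2.const_mul _) (hf.const_mul _), intervalIntegral.integral_const_mul,
      intervalIntegral.integral_const_mul, intervalIntegral.integral_const, smul_eq_mul]
    ring
  rw [hexpand] at hvar
  nlinarith [sub_pos.mpr hlt]

section Poincare

variable {v v' : ℝ → ℝ} {a b : ℝ}

theorem sq_sub_le_mul_integral_sq_deriv (hab : a ≤ b)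
    (hv : ∀ t ∈ Icc a b, HasDerivAt v (v' t) t) (hv' : ContinuousOn v' (Icc a b)) :
    (v b - v a) ^ 2 ≤ (b - a) * ∫ x in a..b, v' x ^ 2 := by
  have hftc : ∫ x in a..b, v' x = v b - v a :=
    integral_eq_sub_of_hasDerivAt (fun t ht => hv t (uIcc_of_le hab ▸ ht))
      (hv'.intervalIntegrable_of_Icc hab)
  rw [← hftc]
  exact sq_integral_le_mul_integral_sq hab (hv'.intervalIntegrable_of_Icc hab)
    ((hv'.pow 2).intervalIntegrable_of_Icc hab)

theorem integral_sq_le_of_eq_zero_left (hab : a ≤ b)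
    (hv : ∀ t ∈ Icc a b, HasDerivAt v (v' t) t) (hv' : ContinuousOn v' (Icc a b))
    (hva : v a = 0) :
    ∫ x in a..b, v x ^ 2 ≤ (b - a) ^ 2 / 2 * ∫ x in a..b, v' x ^ 2 := by
  set C := ∫ x in a..b, v' x ^ 2
  have hpointwise : ∀ t ∈ Icc a b, v t ^ 2 ≤ (t - a) * C := by
    intro t ⟨hat, htb⟩
    have hsub : Icc a t ⊆ Icc a b := Icc_subset_Icc_right htb
    have hincr := sq_sub_le_mul_integral_sq_deriv hat (fun s hs => hv s (hsub hs)) (hv'.mono hsub)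
    have hmono : ∫ x in a..t, v' x ^ 2 ≤ C :=
      integral_mono_interval le_rfl hat htb (.of_forall fun _ => sq_nonneg _)
        ((hv'.pow 2).intervalIntegrable_of_Icc hab)
    rw [hva, sub_zero] at hincr
    exact hincr.trans (mul_le_mul_of_nonneg_left hmono (sub_nonneg.mpr hat))
  have hv_cont : ContinuousOn v (Icc a b) :=
    continuousOn_of_forall_continuousAt fun t ht => (hv t ht).continuousAt
  calc ∫ x in a..b, v x ^ 2 ≤ ∫ x in a..b, (x - a) * C :=
        integral_mono_on hab ((hv_cont.pow 2).intervalIntegrable_of_Icc hab)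
          ((intervalIntegrable_id.sub intervalIntegrable_const).mul_const C) hpointwise
    _ = (b - a) ^ 2 / 2 * C := by
        rw [intervalIntegral.integral_mul_const, integral_comp_sub_right (fun x => x), integral_id]
        ring

theorem integral_sq_le_of_eq_zero_right (hab : a ≤ b)
    (hv : ∀ t ∈ Icc a b, HasDerivAt v (v' t) t) (hv' : ContinuousOn v' (Icc a b))
    (hvb : v b = 0) :
    ∫ x in a..b, v x ^ 2 ≤ (b - a) ^ 2 / 2 * ∫ x in a..b, v' x ^ 2 := by
  have hneg_mem : ∀ t ∈ Icc (-b) (-a), -t ∈ Icc a b := fun t ⟨h₁, h₂⟩ =>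
    ⟨le_neg.mpr h₂, neg_le.mpr h₁⟩
  have hreflect := integral_sq_le_of_eq_zero_left (v := fun x => v (-x))
    (v' := fun x => -v' (-x)) (neg_le_neg hab)
    (fun t ht => by
      simpa [Function.comp_def] using (hv (-t) (hneg_mem t ht)).comp t (hasDerivAt_neg t))
    (hv'.comp continuous_neg.continuousOn hneg_mem).neg (by simpa using hvb)
  simpa only [neg_sq, integral_comp_neg (fun x => v x ^ 2), integral_comp_neg (fun x => v' x ^ 2),
    neg_neg, neg_sub_neg] using hreflect

theorem integral_sq_le_of_eq_zero_of_eq_zero (hab : a ≤ b)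
    (hv : ∀ t ∈ Icc a b, HasDerivAt v (v' t) t) (hv' : ContinuousOn v' (Icc a b))
    (hva : v a = 0) (hvb : v b = 0) :
    ∫ x in a..b, v x ^ 2 ≤ (b - a) ^ 2 / 8 * ∫ x in a..b, v' x ^ 2 := by
  set m := (a + b) / 2 with hm
  have ham : a ≤ m := by linarith
  have hmb : m ≤ b := by linarith
  have hleft : Icc a m ⊆ Icc a b := Icc_subset_Icc_right hmb
  have hright : Icc m b ⊆ Icc a b := Icc_subset_Icc_left ham
  have hv_cont : ContinuousOn (fun x => v x ^ 2) (Icc a b) :=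
    (continuousOn_of_forall_continuousAt fun t ht => (hv t ht).continuousAt).pow 2
  have hv'_cont : ContinuousOn (fun x => v' x ^ 2) (Icc a b) := hv'.pow 2
  have hL := integral_sq_le_of_eq_zero_left ham (fun t ht => hv t (hleft ht)) (hv'.mono hleft) hva
  have hR := integral_sq_le_of_eq_zero_right hmb (fun t ht => hv t (hright ht))
    (hv'.mono hright) hvb
  rw [← integral_add_adjacent_intervals ((hv_cont.mono hleft).intervalIntegrable_of_Icc ham)
      ((hv_cont.mono hright).intervalIntegrable_of_Icc hmb),
    ← integral_add_adjacent_intervals ((hv'_cont.mono hleft).intervalIntegrable_of_Icc ham)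
      ((hv'_cont.mono hright).intervalIntegrable_of_Icc hmb)]
  have hleft_len : m - a = (b - a) / 2 := by ring
  have hright_len : b - m = (b - a) / 2 := by ring
  rw [hleft_len] at hL
  rw [hright_len] at hR
  linarith

end Poincare

theorem sqrt_le_mul_sqrt_of_le_sq_mul {x y c : ℝ} (hc : 0 ≤ c) (hy : 0 ≤ y)
    (h : x ≤ c ^ 2 * y) : √x ≤ c * √y := by
  rw [sqrt_le_iff, mul_pow, sq_sqrt hy]
  exact ⟨by positivity, h⟩

theorem stmt8_general
    (T : ℝ) (hT0 : 0 < T)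
    (u u' u'' : ℝ → ℝ)
    (hu : ∀ t ∈ Icc (0:ℝ) T, HasDerivAt u (u' t) t)
    (hu' : ∀ t ∈ Icc (0:ℝ) T, HasDerivAt u' (u'' t) t)
    (hu'' : ContinuousOn u'' (Icc 0 T))
    (hu0 : u 0 = 0) (huT : u T = 0) (hu'0 : u' 0 = 0) :
    Real.sqrt (∫ x in (0:ℝ)..T, |u x| ^ 2) ≤
      (T ^ 2 / (2 * Real.sqrt 2)) * Real.sqrt (∫ x in (0:ℝ)..T, |u'' x| ^ 2) ∧
    Real.sqrt (∫ x in (0:ℝ)..T, |u' x| ^ 2) ≤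
      (T / Real.sqrt 2) * Real.sqrt (∫ x in (0:ℝ)..T, |u'' x| ^ 2) := by
  simp only [sq_abs]
  have hu'_cont : ContinuousOn u' (Icc 0 T) :=
    continuousOn_of_forall_continuousAt fun t ht => (hu' t ht).continuousAt
  have hu'_bound := integral_sq_le_of_eq_zero_left hT0.le hu' hu'' hu'0
  have hu_bound := integral_sq_le_of_eq_zero_of_eq_zero hT0.le hu hu'_cont hu0 huT
  have hu''_nonneg : 0 ≤ ∫ x in (0:ℝ)..T, u'' x ^ 2 :=
    integral_nonneg hT0.le fun _ _ => sq_nonneg _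
  have hsqrt2 : √2 ^ 2 = 2 := sq_sqrt zero_le_two
  simp only [sub_zero] at hu'_bound hu_bound
  constructor
  · refine sqrt_le_mul_sqrt_of_le_sq_mul (by positivity) hu''_nonneg ?_
    calc ∫ x in (0:ℝ)..T, u x ^ 2 ≤ T ^ 2 / 8 * ∫ x in (0:ℝ)..T, u' x ^ 2 := hu_bound
      _ ≤ T ^ 2 / 8 * (T ^ 2 / 2 * ∫ x in (0:ℝ)..T, u'' x ^ 2) := by gcongr
      _ ≤ (T ^ 2 / (2 * √2)) ^ 2 * ∫ x in (0:ℝ)..T, u'' x ^ 2 := by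
        rw [div_pow, mul_pow, hsqrt2]
        nlinarith [mul_nonneg (pow_nonneg (sq_nonneg T) 2) hu''_nonneg]
  · refine sqrt_le_mul_sqrt_of_le_sq_mul (by positivity) hu''_nonneg ?_
    rwa [div_pow, hsqrt2]

theorem stmt8
    (T : ℝ) (hT0 : 0 < T)
    (u u' u'' : ℝ → ℝ)
    (hu : ∀ t ∈ Icc (0:ℝ) T, HasDerivAt u (u' t) t)
    (hu' : ∀ t ∈ Icc (0:ℝ) T, HasDerivAt u' (u'' t) t)
    (hu'' : ContinuousOn u'' (Icc 0 T))
    (hu0 : u 0 = 0) (huT : u T = 0) (hu'0 : u' 0 = 0) (hu'T : u' T = 0) :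
    Real.sqrt (∫ x in (0:ℝ)..T, |u x| ^ 2) ≤
      (T ^ 2 / (2 * Real.sqrt 2)) * Real.sqrt (∫ x in (0:ℝ)..T, |u'' x| ^ 2) ∧
    Real.sqrt (∫ x in (0:ℝ)..T, |u' x| ^ 2) ≤
      (T / Real.sqrt 2) * Real.sqrt (∫ x in (0:ℝ)..T, |u'' x| ^ 2) :=
  stmt8_general T hT0 u u' u'' hu hu' hu'' hu0 huT hu'0
end

section
/- Let 0 < T ≤ 1, N ∈ ℕ with N ≥ 1, and 0 = s₀ < t₁ < s₁ < t₂ < ⋯ < s_N < t_{N+1} = T. Let h : ℝ → ℝ be continuous on [0,T], H(t) = ∫₀^t h(τ)dτ, H₀ = min_{t∈[0,T]} H(t), M₁ = max_{t∈[0,T]} e^{H(t)}. Let θ₁, θ₂ ∈ (1,2), A₁, a₂ > 0 and e_* = max(e^{−H₀θ₁/2}, e^{−H₀θ₂/2}). For i = 0,1,…,N let F̃ᵢ : ℝ × ℝ → ℝ be continuous with |F̃ᵢ(t,v)| ≤ (A₁/θ₁)|v|^{θ₁} for all t ∈ (sᵢ, t_{i+1}] and v ∈ ℝ, and for i = 1,…,N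 let Ĩᵢ : ℝ → ℝ be continuous with |Ĩᵢ(v)| ≤ a₂(|v|^{θ₂−1} + 1) for all v ∈ ℝ. Then for every u ∈ E_T, with ‖u‖_E = (∫₀^T e^{H(t)}|u''(t)|² dt)^{1/2}, one has ∑_{i=0}^N ∫_{sᵢ}^{t_{i+1}} e^{H(t)} F̃ᵢ(t, u(t)) dt ≤ M₁·A₁·T·e_*·‖u‖_E^{θ₁}, and ∑_{i=1}^N ∫₀^{u(tᵢ)} e^{H(tᵢ)} Ĩᵢ(s) ds ≤ N·M₁·a₂·((θ₂+1)/θ₂)·e_*·(‖u‖_E^{θ₂} + 1). -/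
/-!
Everything rests on the sup bound `|u t| ≤ K := exp (-H₀ / 2) * ‖u‖_E` on `[0, T]`: since
`u 0 = u' 0 = 0`, the mean value inequality gives `|u t| ≤ t * sup |u'| ≤ ∫₀ᵀ |u''|`, and
Cauchy–Schwarz, `T ≤ 1` and `exp (H x) ≥ exp H₀` bound this by `K`. Each integrand of the first
sum is then at most `M₁ (A₁ / θ₁) K ^ θ₁`, and the intervals `(sᵢ, tᵢ₊₁]` have total length at
most `T`. The `i`-th impulsive term is at most `M₁ a₂ (|v| ^ θ₂ / θ₂ + |v|)` with `v = u tᵢ`, and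
`|v| ≤ K` gives `|v| ^ θ / θ + |v| ≤ (θ + 1) / θ * (K ^ θ + 1)`. Finally
`K ^ θ = exp (-H₀ θ / 2) ‖u‖_E ^ θ ≤ e_* ‖u‖_E ^ θ`.
-/

open Set MeasureTheory Real

theorem abs_integral_le_of_abs_le_rpow_add_one {θ A : ℝ} (hθ : 0 < θ) {g : ℝ → ℝ}
    (hg : ∀ s, |g s| ≤ A * (|s| ^ (θ - 1) + 1)) (v : ℝ) :
    |∫ s in (0 : ℝ)..v, g s| ≤ A * (|v| ^ θ / θ + |v|) := by
  wlog hv : 0 ≤ v generalizing g v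
  · have := this (g := fun s => g (-s)) (fun s => by simpa using hg (-s)) (-v) (by linarith)
    rwa [intervalIntegral.integral_comp_neg, neg_neg, neg_zero, intervalIntegral.integral_symm,
      abs_neg, abs_neg] at this
  have hrpow : IntervalIntegrable (fun s : ℝ => s ^ (θ - 1)) volume 0 v :=
    intervalIntegral.intervalIntegrable_rpow' (by linarith)
  calc |∫ s in (0 : ℝ)..v, g s| ≤ ∫ s in (0 : ℝ)..v, A * (s ^ (θ - 1) + 1) :=
        intervalIntegral.norm_integral_le_of_norm_le (f := g) hv
          (Filter.Eventually.of_forall fun s hs => by simpa [abs_of_pos hs.1] using hg s)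
          ((hrpow.add intervalIntegrable_const).const_mul A)
    _ = A * (|v| ^ θ / θ + |v|) := by
        rw [intervalIntegral.integral_const_mul, intervalIntegral.integral_add hrpow
          intervalIntegrable_const, integral_rpow (Or.inl (by linarith)), sub_add_cancel,
          zero_rpow hθ.ne', abs_of_nonneg hv]
        simp

theorem rpow_div_add_le_of_le {θ v K : ℝ} (hθ : 1 ≤ θ) (hv : 0 ≤ v) (hvK : v ≤ K) :
    v ^ θ / θ + v ≤ (θ + 1) / θ * (K ^ θ + 1) := by
  have hθ0 : 0 < θ := by linarith
  have hpow : v ^ θ ≤ K ^ θ := rpow_le_rpow hv hvK hθ0.le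
  have hK : K ≤ K ^ θ + 1 := by
    rcases le_or_gt K 1 with hK1 | hK1
    · linarith [rpow_nonneg (hv.trans hvK) θ]
    · linarith [self_le_rpow_of_one_le hK1.le hθ]
  calc v ^ θ / θ + v ≤ (K ^ θ + 1) / θ + (K ^ θ + 1) := by
        gcongr
        · linarith
        · linarith
    _ = (θ + 1) / θ * (K ^ θ + 1) := by field_simp; ring

theorem integral_mul_le_of_abs_le_rpow_add_one {θ a c M v K : ℝ} (hθ : 1 ≤ θ) {g : ℝ → ℝ}
    (hg : ∀ s, |g s| ≤ a * (|s| ^ (θ - 1) + 1)) (hc : |c| ≤ M) (hv : |v| ≤ K) :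
    ∫ s in (0 : ℝ)..v, c * g s ≤ M * a * ((θ + 1) / θ) * (K ^ θ + 1) := by
  have hM : 0 ≤ M := (abs_nonneg c).trans hc
  have ha : 0 ≤ a := nonneg_of_mul_nonneg_left ((abs_nonneg _).trans (hg 0)) (by positivity)
  calc ∫ s in (0 : ℝ)..v, c * g s ≤ |∫ s in (0 : ℝ)..v, c * g s| := le_abs_self _
    _ ≤ M * a * (|v| ^ θ / θ + |v|) := by
        refine abs_integral_le_of_abs_le_rpow_add_one (by linarith) (fun s => ?_) v
        rw [abs_mul, mul_assoc]
        exact mul_le_mul hc (hg s) (abs_nonneg _) hM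
    _ ≤ M * a * ((θ + 1) / θ * (K ^ θ + 1)) := by
        gcongr; exact rpow_div_add_le_of_le hθ (abs_nonneg v) hv
    _ = M * a * ((θ + 1) / θ) * (K ^ θ + 1) := by ring

theorem abs_le_integral_abs_deriv {f f' : ℝ → ℝ} {a b : ℝ}
    (hf : ∀ x ∈ Icc a b, HasDerivAt f (f' x) x) (hf' : ContinuousOn f' (Icc a b))
    (ha : f a = 0) {x : ℝ} (hx : x ∈ Icc a b) : |f x| ≤ ∫ y in a..b, |f' y| := by
  have hsub : uIcc a x ⊆ Icc a b := by
    rw [uIcc_of_le hx.1]; exact Icc_subset_Icc_right hx.2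
  have hftc : ∫ y in a..x, f' y = f x := by
    rw [intervalIntegral.integral_eq_sub_of_hasDerivAt (fun y hy => hf y (hsub hy))
      ((hf'.mono hsub).intervalIntegrable), ha, sub_zero]
  have hab : IntervalIntegrable (fun y => |f' y|) volume a b :=
    (hf'.abs.mono (uIcc_of_le (hx.1.trans hx.2) ▸ Subset.rfl)).intervalIntegrable
  rw [← hftc]
  calc |∫ y in a..x, f' y| ≤ ∫ y in a..x, |f' y| :=
        intervalIntegral.abs_integral_le_integral_abs hx.1
    _ ≤ ∫ y in a..b, |f' y| :=
        intervalIntegral.integral_mono_interval le_rfl hx.1 hx.2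
          (Filter.Eventually.of_forall fun y => abs_nonneg _) hab

theorem integral_abs_le_sqrt_mul_sqrt_integral_sq {f : ℝ → ℝ} {a b : ℝ} (hab : a ≤ b)
    (hf : ContinuousOn f (Icc a b)) :
    ∫ x in a..b, |f x| ≤ √(b - a) * √(∫ x in a..b, |f x| ^ 2) := by
  set μ := volume.restrict (Ioc a b)
  have : IsFiniteMeasure μ := isFiniteMeasure_restrict.2 measure_Ioc_lt_top.ne
  obtain ⟨C, hC⟩ := isCompact_Icc.exists_bound_of_continuousOn hf
  have hmem : MemLp (fun x => |f x|) (ENNReal.ofReal 2) μ := by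
    refine MemLp.of_bound ((hf.mono Ioc_subset_Icc_self).aestronglyMeasurable
      measurableSet_Ioc).norm C ?_
    filter_upwards [ae_restrict_mem measurableSet_Ioc] with x hx
    simpa using hC x (Ioc_subset_Icc_self hx)
  have key := integral_mul_le_Lp_mul_Lq_of_nonneg Real.HolderConjugate.two_two (μ := μ)
    (Filter.Eventually.of_forall fun x => abs_nonneg (f x))
    (Filter.Eventually.of_forall fun _ => zero_le_one) hmem (memLp_const 1)
  simp only [mul_one, integral_const, smul_eq_mul, rpow_two] at key
  rw [intervalIntegral.integral_of_le hab, intervalIntegral.integral_of_le hab,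
    sqrt_eq_rpow, sqrt_eq_rpow, mul_comm]
  simpa [μ, Real.volume_real_Ioc_of_le hab] using key

theorem integral_sq_le_exp_neg_mul_integral_exp_mul_sq {f H : ℝ → ℝ} {a b H₀ : ℝ}
    (hab : a ≤ b) (hf : ContinuousOn f (Icc a b)) (hH : ContinuousOn H (Icc a b))
    (hH₀ : ∀ x ∈ Icc a b, H₀ ≤ H x) :
    ∫ x in a..b, |f x| ^ 2 ≤ exp (-H₀) * ∫ x in a..b, exp (H x) * |f x| ^ 2 := by
  rw [← intervalIntegral.integral_const_mul]
  refine intervalIntegral.integral_mono_on hab ((hf.abs.pow 2).intervalIntegrable_of_Icc hab)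
    ((continuousOn_const.mul ((continuous_exp.comp_continuousOn hH).mul
      (hf.abs.pow 2))).intervalIntegrable_of_Icc hab) fun x hx => ?_
  have hexp : 1 ≤ exp (-H₀) * exp (H x) := by
    rw [← exp_add]; exact one_le_exp (by linarith [hH₀ x hx])
  nlinarith [sq_nonneg |f x|]

theorem abs_le_exp_mul_sqrt_integral_exp_mul_sq {T H₀ : ℝ} (hT0 : 0 ≤ T) (hT1 : T ≤ 1)
    {H u u' u'' : ℝ → ℝ} (hH : ContinuousOn H (Icc 0 T)) (hH₀ : ∀ x ∈ Icc 0 T, H₀ ≤ H x)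
    (hu : ∀ t ∈ Icc 0 T, HasDerivAt u (u' t) t) (hu' : ∀ t ∈ Icc 0 T, HasDerivAt u' (u'' t) t)
    (hu'' : ContinuousOn u'' (Icc 0 T)) (hu0 : u 0 = 0) (hu'0 : u' 0 = 0)
    {t : ℝ} (ht : t ∈ Icc 0 T) :
    |u t| ≤ exp (-H₀ / 2) * √(∫ x in (0 : ℝ)..T, exp (H x) * |u'' x| ^ 2) := by
  set C := ∫ x in (0 : ℝ)..T, |u'' x|
  have hu'C : ∀ x ∈ Icc 0 T, |u' x| ≤ C := fun x hx =>
    abs_le_integral_abs_deriv hu' hu'' hu'0 hx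
  have hC0 : 0 ≤ C := (abs_nonneg _).trans (hu'C 0 ⟨le_rfl, hT0⟩)
  have hC : C ≤ exp (-H₀ / 2) * √(∫ x in (0 : ℝ)..T, exp (H x) * |u'' x| ^ 2) :=
    calc C ≤ √(T - 0) * √(∫ x in (0 : ℝ)..T, |u'' x| ^ 2) :=
          integral_abs_le_sqrt_mul_sqrt_integral_sq hT0 hu''
      _ ≤ 1 * √(exp (-H₀) * ∫ x in (0 : ℝ)..T, exp (H x) * |u'' x| ^ 2) := by
          gcongr
          · exact sqrt_le_one.2 (by linarith)
          · exact integral_sq_le_exp_neg_mul_integral_exp_mul_sq hT0 hu'' hH hH₀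
      _ = exp (-H₀ / 2) * √(∫ x in (0 : ℝ)..T, exp (H x) * |u'' x| ^ 2) := by
          rw [one_mul, sqrt_mul (exp_pos _).le, ← exp_half]
  calc |u t| = |u t - u 0| := by rw [hu0, sub_zero]
    _ ≤ C * (t - 0) := norm_image_sub_le_of_norm_deriv_le_segment'
          (fun x hx => (hu x hx).hasDerivWithinAt)
          (fun x hx => hu'C x (Ico_subset_Icc_self hx)) t ht
    _ ≤ C := by nlinarith [ht.1, ht.2]
    _ ≤ _ := hC

section Interlaced

variable {s t : ℕ → ℝ} {N : ℕ}

theorem le_and_le_of_interlaced (hst : ∀ i ≤ N, s i ≤ t (i + 1))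
    (hts : ∀ i, 1 ≤ i → i ≤ N → t i ≤ s i) {i : ℕ} (hi : i ≤ N) :
    s 0 ≤ s i ∧ t (i + 1) ≤ t (N + 1) := by
  induction N generalizing i with
  | zero => simp [Nat.le_zero.mp hi]
  | succ n ih =>
    have ih' := @ih (fun i hi => hst i (by omega)) (fun i h1 hi => hts i h1 (by omega))
    have hgap := hts (n + 1) (by omega) le_rfl
    rcases Nat.of_le_succ hi with hi | rfl
    · exact ⟨(ih' hi).1, by linarith [(ih' hi).2, hst (n + 1) le_rfl]⟩
    · exact ⟨by linarith [(ih' (le_refl n)).1, hst n (by omega)], le_rfl⟩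

theorem Icc_subset_Icc_of_interlaced (hst : ∀ i ≤ N, s i ≤ t (i + 1))
    (hts : ∀ i, 1 ≤ i → i ≤ N → t i ≤ s i) {i : ℕ} (hi : i ≤ N) :
    Icc (s i) (t (i + 1)) ⊆ Icc (s 0) (t (N + 1)) :=
  Icc_subset_Icc (le_and_le_of_interlaced hst hts hi).1 (le_and_le_of_interlaced hst hts hi).2

theorem mem_Icc_of_interlaced (hst : ∀ i ≤ N, s i ≤ t (i + 1))
    (hts : ∀ i, 1 ≤ i → i ≤ N → t i ≤ s i) {i : ℕ} (hi1 : 1 ≤ i) (hi : i ≤ N + 1) :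
    t i ∈ Icc (s 0) (t (N + 1)) := by
  obtain ⟨j, rfl⟩ : ∃ j, i = j + 1 := ⟨i - 1, by omega⟩
  exact Icc_subset_Icc_of_interlaced hst hts (by omega) (right_mem_Icc.2 (hst j (by omega)))

theorem sum_sub_le_of_interlaced (hst : ∀ i ≤ N, s i ≤ t (i + 1))
    (hts : ∀ i, 1 ≤ i → i ≤ N → t i ≤ s i) :
    ∑ i ∈ Finset.range (N + 1), (t (i + 1) - s i) ≤ t (N + 1) - s 0 := by
  induction N with
  | zero => simp
  | succ n ih =>
    rw [Finset.sum_range_succ]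
    have := ih (fun i hi => hst i (by omega)) (fun i h1 hi => hts i h1 (by omega))
    linarith [hts (n + 1) (by omega) le_rfl]

theorem sum_integral_le_of_interlaced (hst : ∀ i ≤ N, s i ≤ t (i + 1))
    (hts : ∀ i, 1 ≤ i → i ≤ N → t i ≤ s i) {f : ℕ → ℝ → ℝ} {C : ℝ} (hC : 0 ≤ C)
    (hf : ∀ i ≤ N, ∀ x ∈ Ioc (s i) (t (i + 1)), |f i x| ≤ C) :
    ∑ i ∈ Finset.range (N + 1), ∫ x in s i..t (i + 1), f i x ≤ C * (t (N + 1) - s 0) :=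
  calc ∑ i ∈ Finset.range (N + 1), ∫ x in s i..t (i + 1), f i x
      ≤ ∑ i ∈ Finset.range (N + 1), C * (t (i + 1) - s i) := by
        refine Finset.sum_le_sum fun i hi => ?_
        have hi : i ≤ N := Nat.lt_succ_iff.mp (Finset.mem_range.mp hi)
        have hle := hst i hi
        have := intervalIntegral.norm_integral_le_of_norm_le_const (f := f i) (C := C)
          (fun x hx => hf i hi x (by rwa [uIoc_of_le hle] at hx))
        rw [Real.norm_eq_abs, abs_of_nonneg (sub_nonneg.2 hle)] at this
        exact (le_abs_self _).trans this
    _ = C * ∑ i ∈ Finset.range (N + 1), (t (i + 1) - s i) := (Finset.mul_sum ..).symm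
    _ ≤ C * (t (N + 1) - s 0) := mul_le_mul_of_nonneg_left (sum_sub_le_of_interlaced hst hts) hC

theorem sum_integral_mul_le_of_interlaced (hst : ∀ i ≤ N, s i ≤ t (i + 1))
    (hts : ∀ i, 1 ≤ i → i ≤ N → t i ≤ s i) {w u : ℝ → ℝ} {F : ℕ → ℝ → ℝ → ℝ} {M A K θ : ℝ}
    (hA : 0 ≤ A) (hθ : 0 ≤ θ) (hw : ∀ x ∈ Icc (s 0) (t (N + 1)), |w x| ≤ M)
    (hu : ∀ x ∈ Icc (s 0) (t (N + 1)), |u x| ≤ K)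
    (hF : ∀ i ≤ N, ∀ x ∈ Ioc (s i) (t (i + 1)), ∀ v, |F i x v| ≤ A * |v| ^ θ) :
    ∑ i ∈ Finset.range (N + 1), ∫ x in s i..t (i + 1), w x * F i x (u x)
      ≤ M * A * K ^ θ * (t (N + 1) - s 0) := by
  have hs0 : s 0 ∈ Icc (s 0) (t (N + 1)) :=
    Icc_subset_Icc_of_interlaced hst hts (Nat.zero_le N)
      (left_mem_Icc.2 (hst 0 (Nat.zero_le N)))
  have hM : 0 ≤ M := (abs_nonneg _).trans (hw _ hs0)
  have hK : 0 ≤ K := (abs_nonneg _).trans (hu _ hs0)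
  refine sum_integral_le_of_interlaced hst hts (by positivity) fun i hi x hx => ?_
  have hx' := Icc_subset_Icc_of_interlaced hst hts hi (Ioc_subset_Icc_self hx)
  calc |w x * F i x (u x)| ≤ M * (A * |u x| ^ θ) := by
        rw [abs_mul]; exact mul_le_mul (hw x hx') (hF i hi x hx _) (abs_nonneg _) hM
    _ ≤ M * A * K ^ θ := by
        rw [← mul_assoc]; gcongr; exact hu x hx'

end Interlaced

theorem exp_neg_half_mul_rpow_le {H₀ θ x e : ℝ} (hx : 0 ≤ x)
    (he : exp (-(H₀ * θ) / 2) ≤ e) : (exp (-H₀ / 2) * x) ^ θ ≤ e * x ^ θ := by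
  rw [mul_rpow (exp_pos _).le hx, ← exp_mul]
  refine mul_le_mul_of_nonneg_right ?_ (rpow_nonneg hx θ)
  rwa [show -H₀ / 2 * θ = -(H₀ * θ) / 2 by ring]

theorem stmt9_general
    (T : ℝ) (hT0 : 0 < T) (hT1 : T ≤ 1)
    (N : ℕ)
    (ss tt : ℕ → ℝ)
    (hs0 : ss 0 = 0) (htN : tt (N + 1) = T)
    (hst : ∀ i ≤ N, ss i < tt (i + 1))
    (hts : ∀ i, 1 ≤ i → i ≤ N → tt i < ss i)
    (h : ℝ → ℝ) (hh : ContinuousOn h (Icc 0 T))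
    (H : ℝ → ℝ) (hH : ∀ t, H t = ∫ τ in (0:ℝ)..t, h τ)
    (H₀ : ℝ) (hH₀ : IsLeast (H '' Icc 0 T) H₀)
    (M₁ : ℝ) (hM₁ : IsGreatest ((fun t => Real.exp (H t)) '' Icc 0 T) M₁)
    (θ₁ θ₂ A₁ a₂ : ℝ)
    (hθ₁ : 1 < θ₁) (hθ₂ : 1 < θ₂)
    (hA₁ : 0 < A₁) (ha₂ : 0 < a₂)
    (estar : ℝ)
    (hestar : estar = max (Real.exp (-(H₀ * θ₁) / 2)) (Real.exp (-(H₀ * θ₂) / 2)))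
    (Ftilde : ℕ → ℝ → ℝ → ℝ)
    (hFt_bound : ∀ i ≤ N, ∀ t ∈ Ioc (ss i) (tt (i + 1)), ∀ v : ℝ,
      |Ftilde i t v| ≤ (A₁ / θ₁) * |v| ^ θ₁)
    (Itilde : ℕ → ℝ → ℝ)
    (hIt_bound : ∀ i, 1 ≤ i → i ≤ N → ∀ v : ℝ,
      |Itilde i v| ≤ a₂ * (|v| ^ (θ₂ - 1) + 1))
    (u u' u'' : ℝ → ℝ)
    (hu : ∀ t ∈ Icc (0:ℝ) T, HasDerivAt u (u' t) t)
    (hu' : ∀ t ∈ Icc (0:ℝ) T, HasDerivAt u' (u'' t) t)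
    (hu'' : ContinuousOn u'' (Icc 0 T))
    (hu0 : u 0 = 0) (hu'0 : u' 0 = 0)
    (uE : ℝ) (huE : uE = Real.sqrt (∫ x in (0:ℝ)..T, Real.exp (H x) * |u'' x| ^ 2)) :
    (∑ i ∈ Finset.range (N + 1),
        ∫ x in (ss i)..(tt (i + 1)), Real.exp (H x) * Ftilde i x (u x))
      ≤ M₁ * A₁ * T * estar * uE ^ θ₁ ∧
    (∑ i ∈ Finset.Icc 1 N,
        ∫ s in (0:ℝ)..(u (tt i)), Real.exp (H (tt i)) * Itilde i s)
      ≤ (N : ℝ) * M₁ * a₂ * ((θ₂ + 1) / θ₂) * estar * (uE ^ θ₂ + 1) := by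
  have hst' : ∀ i ≤ N, ss i ≤ tt (i + 1) := fun i hi => (hst i hi).le
  have hts' : ∀ i, 1 ≤ i → i ≤ N → tt i ≤ ss i := fun i hi1 hi => (hts i hi1 hi).le
  have hHcont : ContinuousOn H (Icc 0 T) := by
    have := intervalIntegral.continuousOn_primitive_interval (a := 0) (b := T)
      (μ := volume) (by rw [uIcc_of_le hT0.le]; exact hh.integrableOn_Icc)
    simpa only [uIcc_of_le hT0.le, ← hH] using this
  have hexp : ∀ t ∈ Icc (ss 0) (tt (N + 1)), |exp (H t)| ≤ M₁ := fun t ht => by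
    rw [hs0, htN] at ht; exact (abs_of_pos (exp_pos _)).trans_le (hM₁.2 ⟨t, ht, rfl⟩)
  have hu_le : ∀ t ∈ Icc (ss 0) (tt (N + 1)), |u t| ≤ exp (-H₀ / 2) * uE := fun t ht => by
    rw [hs0, htN] at ht
    exact huE ▸ abs_le_exp_mul_sqrt_integral_exp_mul_sq hT0.le hT1 hHcont
      (fun x hx => hH₀.2 ⟨x, hx, rfl⟩) hu hu' hu'' hu0 hu'0 ht
  have hM₁0 : 0 ≤ M₁ := (exp_pos _).le.trans (hM₁.2 ⟨0, ⟨le_rfl, hT0.le⟩, rfl⟩)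
  have huE0 : 0 ≤ uE := huE ▸ sqrt_nonneg _
  have hH₀0 : H₀ ≤ 0 := by simpa [hH] using hH₀.2 ⟨0, ⟨le_rfl, hT0.le⟩, rfl⟩
  have hestar1 : 1 ≤ estar := hestar ▸ le_max_of_le_left (one_le_exp (by nlinarith))
  have hK₁ := exp_neg_half_mul_rpow_le huE0 (hestar ▸ le_max_left _ _ : _ ≤ estar)
  have hK₂ := exp_neg_half_mul_rpow_le huE0 (hestar ▸ le_max_right _ _ : _ ≤ estar)
  constructor
  · calc _ ≤ M₁ * (A₁ / θ₁) * (exp (-H₀ / 2) * uE) ^ θ₁ * (tt (N + 1) - ss 0) :=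
          sum_integral_mul_le_of_interlaced hst' hts' (by positivity) (by linarith) hexp hu_le
            hFt_bound
      _ ≤ M₁ * A₁ * (estar * uE ^ θ₁) * T := by
          rw [htN, hs0, sub_zero]
          gcongr
          exact div_le_self hA₁.le hθ₁.le
      _ = M₁ * A₁ * T * estar * uE ^ θ₁ := by ring
  · calc _ ≤ ∑ _i ∈ Finset.Icc 1 N,
            M₁ * a₂ * ((θ₂ + 1) / θ₂) * ((exp (-H₀ / 2) * uE) ^ θ₂ + 1) := by
          refine Finset.sum_le_sum fun i hi => ?_
          obtain ⟨hi1, hiN⟩ := Finset.mem_Icc.1 hi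
          have hti := mem_Icc_of_interlaced hst' hts' hi1 (by omega)
          exact integral_mul_le_of_abs_le_rpow_add_one hθ₂.le (hIt_bound i hi1 hiN)
            (hexp _ hti) (hu_le _ hti)
      _ ≤ ∑ _i ∈ Finset.Icc 1 N, M₁ * a₂ * ((θ₂ + 1) / θ₂) * (estar * (uE ^ θ₂ + 1)) := by
          gcongr
          linarith
      _ = (N : ℝ) * M₁ * a₂ * ((θ₂ + 1) / θ₂) * estar * (uE ^ θ₂ + 1) := by
          rw [Finset.sum_const, Nat.card_Icc, add_tsub_cancel_right, nsmul_eq_mul]; ring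

theorem stmt9
    (T : ℝ) (hT0 : 0 < T) (hT1 : T ≤ 1)
    (N : ℕ) (hN : 1 ≤ N)
    (ss tt : ℕ → ℝ)
    (hs0 : ss 0 = 0) (htN : tt (N + 1) = T)
    (hst : ∀ i ≤ N, ss i < tt (i + 1))
    (hts : ∀ i, 1 ≤ i → i ≤ N → tt i < ss i)
    (h : ℝ → ℝ) (hh : ContinuousOn h (Icc 0 T))
    (H : ℝ → ℝ) (hH : ∀ t, H t = ∫ τ in (0:ℝ)..t, h τ)
    (H₀ : ℝ) (hH₀ : IsLeast (H '' Icc 0 T) H₀)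
    (M₁ : ℝ) (hM₁ : IsGreatest ((fun t => Real.exp (H t)) '' Icc 0 T) M₁)
    (θ₁ θ₂ A₁ a₂ : ℝ)
    (hθ₁ : 1 < θ₁) (hθ₁' : θ₁ < 2) (hθ₂ : 1 < θ₂) (hθ₂' : θ₂ < 2)
    (hA₁ : 0 < A₁) (ha₂ : 0 < a₂)
    (estar : ℝ)
    (hestar : estar = max (Real.exp (-(H₀ * θ₁) / 2)) (Real.exp (-(H₀ * θ₂) / 2)))
    (Ftilde : ℕ → ℝ → ℝ → ℝ)
    (hFt_cont : ∀ i ≤ N, Continuous (Function.uncurry (Ftilde i)))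
    (hFt_bound : ∀ i ≤ N, ∀ t ∈ Ioc (ss i) (tt (i + 1)), ∀ v : ℝ,
      |Ftilde i t v| ≤ (A₁ / θ₁) * |v| ^ θ₁)
    (Itilde : ℕ → ℝ → ℝ)
    (hIt_cont : ∀ i, 1 ≤ i → i ≤ N → Continuous (Itilde i))
    (hIt_bound : ∀ i, 1 ≤ i → i ≤ N → ∀ v : ℝ,
      |Itilde i v| ≤ a₂ * (|v| ^ (θ₂ - 1) + 1))
    (u u' u'' : ℝ → ℝ)
    (hu : ∀ t ∈ Icc (0:ℝ) T, HasDerivAt u (u' t) t)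
    (hu' : ∀ t ∈ Icc (0:ℝ) T, HasDerivAt u' (u'' t) t)
    (hu'' : ContinuousOn u'' (Icc 0 T))
    (hu0 : u 0 = 0) (huT : u T = 0) (hu'0 : u' 0 = 0) (hu'T : u' T = 0)
    (uE : ℝ) (huE : uE = Real.sqrt (∫ x in (0:ℝ)..T, Real.exp (H x) * |u'' x| ^ 2)) :
    (∑ i ∈ Finset.range (N + 1),
        ∫ x in (ss i)..(tt (i + 1)), Real.exp (H x) * Ftilde i x (u x))
      ≤ M₁ * A₁ * T * estar * uE ^ θ₁ ∧
    (∑ i ∈ Finset.Icc 1 N,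
        ∫ s in (0:ℝ)..(u (tt i)), Real.exp (H (tt i)) * Itilde i s)
      ≤ (N : ℝ) * M₁ * a₂ * ((θ₂ + 1) / θ₂) * estar * (uE ^ θ₂ + 1) :=
  stmt9_general T hT0 hT1 N ss tt hs0 htN hst hts h hh H hH H₀ hH₀ M₁ hM₁ θ₁ θ₂ A₁ a₂ hθ₁ hθ₂ hA₁
    ha₂ estar hestar Ftilde hFt_bound Itilde hIt_bound u u' u'' hu hu' hu'' hu0 hu'0 uE huE
end

section
/- Let 0 < T ≤ 1, N ∈ ℕ with N ≥ 1, and 0 = s₀ < t₁ < s₁ < t₂ < ⋯ < s_N < t_{N+1} = T. Let h : ℝ → ℝ be continuous on [0,T], H(t) = ∫₀^t h(τ)dτ, H₀ = min_{t∈[0,T]} H(t), M₁ = max_{t∈[0,T]} e^{H(t)}, and let β ∈ ℝ satisfy β < 2e^{H₀}/T². Let θ₁, θ₂ ∈ (1,2), A₁, a₂, C_G > 0 and e_* = max(e^{−H₀θ₁/2}, e^{−H₀θ₂/2}). For i = 0,…,N let F̃ᵢ, G̃ᵢ : ℝ × ℝ → ℝ be continuous with |F̃ᵢ(t,v)| ≤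 (A₁/θ₁)|v|^{θ₁} and |G̃ᵢ(t,v)| ≤ C_G for all t ∈ (sᵢ, t_{i+1}] and v ∈ ℝ, and for i = 1,…,N let Ĩᵢ : ℝ → ℝ be continuous with |Ĩᵢ(v)| ≤ a₂(|v|^{θ₂−1} + 1) for all v ∈ ℝ. For ε ∈ [0,1] and u ∈ E_T define J̃_ε(u) = ½‖u‖_E² − (β/2)∫₀^T |u'(t)|² dt − ∑_{i=0}^N ∫_{sᵢ}^{t_{i+1}} e^{H(t)} F̃ᵢ(t,u(t)) dt − ∑_{i=1}^N ∫₀^{u(tᵢ)} e^{H(tᵢ)} Ĩᵢ(s) ds − ε·∑_{i=0}^N ∫_{sᵢ}^{t_{i+1}} e^{H(t)} G̃ᵢ(t,u(t)) dt, where ‖u‖_E = (∫₀^T e^{H(t)}|u''(t)|² dt)^{1/2}. Then for all ε ∈ [0,1] and u ∈ E_T, J̃_ε(u) ≥ (1/2 − max(β,0)·T²/(4e^{H₀}))·‖u‖_E² − M₁A₁T e_*‖u‖_E^{θ₁} − N M₁ a₂ ((θ₂+1)/θ₂) e_* (‖u‖_E^{θ₂} + 1) − (N+1)·M₁·T·C_G.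 In particular, inf{ J̃_ε(u) : ε ∈ [0,1], u ∈ E_T } > −∞, and J̃ is coercive uniformly in ε: for every M ∈ ℝ there exists R > 0 such that J̃_ε(u) ≥ M whenever ε ∈ [0,1], u ∈ E_T and ‖u‖_E ≥ R. -/
open Set MeasureTheory Real

/-- `u`, with first and second derivatives `u'`, `u''`, belongs to the space
`E = H₀²(0,T)` of twice continuously differentiable functions on `[0,T]`
vanishing together with their first derivatives at the endpoints. -/
def IsInE (T : ℝ) (u u' u'' : ℝ → ℝ) : Prop :=
  (∀ t ∈ Set.Icc (0:ℝ) T, HasDerivAt u (u' t) t) ∧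
  (∀ t ∈ Set.Icc (0:ℝ) T, HasDerivAt u' (u'' t) t) ∧
  ContinuousOn u'' (Set.Icc 0 T) ∧
  u 0 = 0 ∧ u T = 0 ∧ u' 0 = 0 ∧ u' T = 0

/-- The norm `‖u‖_E = (∫₀^T e^{H(t)} |u''(t)|² dt)^{1/2}`. -/
noncomputable def normE (T : ℝ) (H : ℝ → ℝ) (u'' : ℝ → ℝ) : ℝ :=
  Real.sqrt (∫ x in (0:ℝ)..T, Real.exp (H x) * |u'' x| ^ 2)

/-!
Since `u` and `u'` vanish at `0`, Cauchy–Schwarz gives `|u'(t)|² ≤ t ∫₀^T |u''|²`; with `T ≤ 1`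
this yields `sup |u| ≤ ‖u''‖_{L²} ≤ e^{-H₀/2} ‖u‖_E` and `∫₀^T |u'|² ≤ (T²/2) e^{-H₀} ‖u‖_E²`.
The second bound absorbs the `β`-term into the quadratic part; the first bounds each nonlinear term
by a multiple of `‖u‖_E^θ` (the intervals `(sᵢ, tᵢ₊₁]` have total length at most `T`). As `θ < 2`,
these powers are dominated by half of the quadratic term, uniformly in `ε`.
-/

/-- `0 = s₀ < t₁ < s₁ < t₂ < ⋯ < s_N < t_{N+1} = T`, with `sᵢ = ss i` and `tᵢ = tt i`. -/
structure IsImpulsivePartition (T : ℝ) (N : ℕ) (ss tt : ℕ → ℝ) : Prop where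
  ss_zero : ss 0 = 0
  tt_last : tt (N + 1) = T
  ss_lt_tt : ∀ i ≤ N, ss i < tt (i + 1)
  tt_lt_ss : ∀ i, 1 ≤ i → i ≤ N → tt i < ss i

namespace IsImpulsivePartition

variable {T : ℝ} {N : ℕ} {ss tt : ℕ → ℝ}

lemma ss_nonneg (P : IsImpulsivePartition T N ss tt) : ∀ i ≤ N, 0 ≤ ss i
  | 0, _ => P.ss_zero.ge
  | i + 1, hi => by
    have := P.ss_nonneg i (by omega)
    have := P.ss_lt_tt i (by omega)
    have := P.tt_lt_ss (i + 1) (by omega) hi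
    linarith

lemma sum_sub_le (P : IsImpulsivePartition T N ss tt) :
    ∀ n ≤ N, ∑ i ∈ Finset.range (n + 1), (tt (i + 1) - ss i) ≤ tt (n + 1)
  | 0, _ => by simp [P.ss_zero]
  | n + 1, hn => by
    rw [Finset.sum_range_succ]
    have := P.sum_sub_le n (by omega)
    have := P.tt_lt_ss (n + 1) (by omega) hn
    linarith

lemma sum_sub_le_last (P : IsImpulsivePartition T N ss tt) :
    ∑ i ∈ Finset.range (N + 1), (tt (i + 1) - ss i) ≤ T :=
  P.tt_last ▸ P.sum_sub_le N le_rfl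

lemma tt_le (P : IsImpulsivePartition T N ss tt) {i : ℕ} (hi : i ≤ N) : tt (i + 1) ≤ T := by
  induction hi using Nat.decreasingInduction with
  | self => exact P.tt_last.le
  | of_succ k hk ih =>
    have := P.tt_lt_ss (k + 1) (by omega) hk
    have := P.ss_lt_tt (k + 1) hk
    linarith

lemma Ioc_subset_Icc (P : IsImpulsivePartition T N ss tt) {i : ℕ} (hi : i ≤ N) :
    Ioc (ss i) (tt (i + 1)) ⊆ Icc 0 T :=
  Ioc_subset_Icc_self.trans (Icc_subset_Icc (P.ss_nonneg i hi) (P.tt_le hi))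

lemma abs_sum_integral_le (P : IsImpulsivePartition T N ss tt) {f : ℕ → ℝ → ℝ} {C : ℝ}
    (hf : ∀ i ≤ N, ∀ x ∈ Ioc (ss i) (tt (i + 1)), |f i x| ≤ C) :
    |∑ i ∈ Finset.range (N + 1), ∫ x in ss i..tt (i + 1), f i x| ≤ C * T := by
  have hC : 0 ≤ C :=
    (abs_nonneg _).trans (hf 0 N.zero_le _ ⟨P.ss_lt_tt 0 N.zero_le, le_rfl⟩)
  have hterm : ∀ i ∈ Finset.range (N + 1),
      |∫ x in ss i..tt (i + 1), f i x| ≤ C * (tt (i + 1) - ss i) := by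
    intro i hi
    have hiN : i ≤ N := Nat.lt_succ_iff.1 (Finset.mem_range.1 hi)
    have hlt := P.ss_lt_tt i hiN
    have := intervalIntegral.norm_integral_le_of_norm_le_const (f := f i) (C := C)
      fun x hx => (Real.norm_eq_abs _).trans_le (hf i hiN x (by rwa [uIoc_of_le hlt.le] at hx))
    rwa [Real.norm_eq_abs, abs_of_pos (sub_pos.2 hlt)] at this
  calc _ ≤ ∑ i ∈ Finset.range (N + 1), |∫ x in ss i..tt (i + 1), f i x| :=
        Finset.abs_sum_le_sum_abs _ _
    _ ≤ ∑ i ∈ Finset.range (N + 1), C * (tt (i + 1) - ss i) := Finset.sum_le_sum hterm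
    _ ≤ C * T := by rw [← Finset.mul_sum]; exact mul_le_mul_of_nonneg_left P.sum_sub_le_last hC

end IsImpulsivePartition

lemma sq_integral_abs_le_mul_integral_sq {f : ℝ → ℝ} {t : ℝ} (ht : 0 ≤ t)
    (hf : ContinuousOn f (Icc 0 t)) :
    (∫ x in (0:ℝ)..t, |f x|) ^ 2 ≤ t * ∫ x in (0:ℝ)..t, |f x| ^ 2 := by
  have habs : ContinuousOn (fun x => |f x|) (uIcc 0 t) := by rw [uIcc_of_le ht]; exact hf.abs
  have h1 : IntervalIntegrable (fun x => |f x|) volume 0 t := habs.intervalIntegrable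
  have h2 : IntervalIntegrable (fun x => |f x| ^ 2) volume 0 t := (habs.pow 2).intervalIntegrable
  set A := ∫ x in (0:ℝ)..t, |f x|
  set B := ∫ x in (0:ℝ)..t, |f x| ^ 2
  -- expand `0 ≤ ∫ (t |f| - A)²`
  have hvar : ∫ x in (0:ℝ)..t, (t ^ 2 * |f x| ^ 2 - 2 * t * A * |f x| + A ^ 2)
      = t ^ 2 * B - 2 * t * A * A + A ^ 2 * t := by
    rw [intervalIntegral.integral_add ((h2.const_mul _).sub (h1.const_mul _)) intervalIntegrable_const,
      intervalIntegral.integral_sub (h2.const_mul _) (h1.const_mul _),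
      intervalIntegral.integral_const_mul, intervalIntegral.integral_const_mul,
      intervalIntegral.integral_const, smul_eq_mul, sub_zero]
    ring
  have hnonneg : 0 ≤ t ^ 2 * B - 2 * t * A * A + A ^ 2 * t :=
    hvar ▸ intervalIntegral.integral_nonneg ht fun x _ => by nlinarith [sq_nonneg (t * |f x| - A)]
  rcases ht.eq_or_lt with rfl | htpos
  · simp [A]
  · nlinarith

lemma eq_integral_of_hasDerivAt_of_eq_zero {f f' : ℝ → ℝ} {T t : ℝ}
    (hf : ∀ x ∈ Icc 0 T, HasDerivAt f (f' x) x) (hf' : ContinuousOn f' (Icc 0 T))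
    (h0 : f 0 = 0) (ht : t ∈ Icc 0 T) :
    f t = ∫ x in (0:ℝ)..t, f' x := by
  have hsub : uIcc 0 t ⊆ Icc 0 T := by
    rw [uIcc_of_le ht.1]; exact Icc_subset_Icc le_rfl ht.2
  rw [intervalIntegral.integral_eq_sub_of_hasDerivAt (fun x hx => hf x (hsub hx))
    (hf'.mono hsub).intervalIntegrable, h0, sub_zero]

lemma normE_sq {T : ℝ} (hT : 0 ≤ T) (H f : ℝ → ℝ) :
    normE T H f ^ 2 = ∫ x in (0:ℝ)..T, exp (H x) * |f x| ^ 2 :=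
  sq_sqrt (intervalIntegral.integral_nonneg hT fun _ _ => by positivity)

lemma integral_sq_le_exp_neg_mul_normE_sq {T H₀ : ℝ} {H f : ℝ → ℝ} (hT : 0 ≤ T)
    (hH : ContinuousOn H (Icc 0 T)) (hH₀ : ∀ t ∈ Icc 0 T, H₀ ≤ H t)
    (hf : ContinuousOn f (Icc 0 T)) :
    ∫ x in (0:ℝ)..T, |f x| ^ 2 ≤ exp (-H₀) * normE T H f ^ 2 := by
  have hsq : ContinuousOn (fun x => |f x| ^ 2) (uIcc 0 T) := by
    rw [uIcc_of_le hT]; exact hf.abs.pow 2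
  have hH' : ContinuousOn (fun x => exp (H x)) (uIcc 0 T) := by
    rw [uIcc_of_le hT]; exact continuous_exp.comp_continuousOn hH
  rw [normE_sq hT, ← intervalIntegral.integral_const_mul]
  refine intervalIntegral.integral_mono_on hT hsq.intervalIntegrable
    ((hH'.mul hsq).intervalIntegrable.const_mul _) fun x hx => ?_
  rw [← mul_assoc, ← exp_add]
  exact le_mul_of_one_le_left (by positivity) (one_le_exp (by linarith [hH₀ x hx]))

namespace IsInE

variable {T : ℝ} {u u' u'' : ℝ → ℝ}

lemma continuousOn_deriv (hu : IsInE T u u' u'') : ContinuousOn u' (Icc 0 T) :=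
  fun t ht => (hu.2.1 t ht).continuousAt.continuousWithinAt

lemma sq_abs_deriv_le (hu : IsInE T u u' u'') {t : ℝ} (ht : t ∈ Icc 0 T) :
    |u' t| ^ 2 ≤ t * ∫ x in (0:ℝ)..T, |u'' x| ^ 2 := by
  obtain ⟨-, hu', hu'', -, -, hu'0, -⟩ := hu
  have hsq : IntervalIntegrable (fun x => |u'' x| ^ 2) volume 0 T := by
    refine ContinuousOn.intervalIntegrable ?_
    rw [uIcc_of_le (ht.1.trans ht.2)]; exact hu''.abs.pow 2
  calc |u' t| ^ 2 ≤ (∫ x in (0:ℝ)..t, |u'' x|) ^ 2 := by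
        rw [eq_integral_of_hasDerivAt_of_eq_zero hu' hu'' hu'0 ht]
        exact pow_le_pow_left₀ (abs_nonneg _) (intervalIntegral.abs_integral_le_integral_abs ht.1) 2
    _ ≤ t * ∫ x in (0:ℝ)..t, |u'' x| ^ 2 :=
        sq_integral_abs_le_mul_integral_sq ht.1 (hu''.mono (Icc_subset_Icc le_rfl ht.2))
    _ ≤ t * ∫ x in (0:ℝ)..T, |u'' x| ^ 2 := by
        refine mul_le_mul_of_nonneg_left ?_ ht.1
        exact intervalIntegral.integral_mono_interval le_rfl ht.1 ht.2
          (Filter.Eventually.of_forall fun x => by positivity) hsq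

lemma abs_le_sqrt_integral_sq (hu : IsInE T u u' u'') (hT1 : T ≤ 1) {t : ℝ} (ht : t ∈ Icc 0 T) :
    |u t| ≤ sqrt (∫ x in (0:ℝ)..T, |u'' x| ^ 2) := by
  set Q := ∫ x in (0:ℝ)..T, |u'' x| ^ 2
  have hQ : 0 ≤ Q := intervalIntegral.integral_nonneg (ht.1.trans ht.2) fun _ _ => by positivity
  have hu' : ∀ x ∈ uIoc 0 t, ‖u' x‖ ≤ sqrt Q := by
    intro x hx
    rw [uIoc_of_le ht.1] at hx
    refine (le_sqrt (abs_nonneg _) hQ).2 ((hu.sq_abs_deriv_le ⟨hx.1.le, hx.2.trans ht.2⟩).trans ?_)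
    exact mul_le_of_le_one_left hQ (hx.2.trans (ht.2.trans hT1))
  calc |u t| = ‖∫ x in (0:ℝ)..t, u' x‖ := by
        rw [eq_integral_of_hasDerivAt_of_eq_zero hu.1 hu.continuousOn_deriv hu.2.2.2.1 ht]; rfl
    _ ≤ sqrt Q * |t - 0| := intervalIntegral.norm_integral_le_of_norm_le_const hu'
    _ ≤ sqrt Q := by
        rw [sub_zero, abs_of_nonneg ht.1]
        exact mul_le_of_le_one_right (sqrt_nonneg _) (ht.2.trans hT1)

lemma integral_sq_deriv_le (hu : IsInE T u u' u'') (hT : 0 ≤ T) :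
    ∫ x in (0:ℝ)..T, |u' x| ^ 2 ≤ T ^ 2 / 2 * ∫ x in (0:ℝ)..T, |u'' x| ^ 2 := by
  have hint : IntervalIntegrable (fun x => |u' x| ^ 2) volume 0 T := by
    refine ContinuousOn.intervalIntegrable ?_
    rw [uIcc_of_le hT]; exact hu.continuousOn_deriv.abs.pow 2
  calc ∫ x in (0:ℝ)..T, |u' x| ^ 2
      ≤ ∫ x in (0:ℝ)..T, x * ∫ x in (0:ℝ)..T, |u'' x| ^ 2 :=
        intervalIntegral.integral_mono_on hT hint
          (by apply Continuous.intervalIntegrable; fun_prop) fun x hx => hu.sq_abs_deriv_le hx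
    _ = T ^ 2 / 2 * ∫ x in (0:ℝ)..T, |u'' x| ^ 2 := by
        rw [intervalIntegral.integral_mul_const, integral_id]; ring

lemma abs_le_exp_mul_normE (hu : IsInE T u u' u'') (hT1 : T ≤ 1) {H : ℝ → ℝ} {H₀ : ℝ}
    (hH : ContinuousOn H (Icc 0 T)) (hH₀ : ∀ t ∈ Icc 0 T, H₀ ≤ H t) {t : ℝ} (ht : t ∈ Icc 0 T) :
    |u t| ≤ exp (-(H₀ / 2)) * normE T H u'' := by
  have hT : 0 ≤ T := ht.1.trans ht.2
  have hexp : exp (-H₀) * normE T H u'' ^ 2 = (exp (-(H₀ / 2)) * normE T H u'') ^ 2 := by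
    rw [mul_pow, ← exp_nat_mul]; ring_nf
  calc |u t| ≤ sqrt (∫ x in (0:ℝ)..T, |u'' x| ^ 2) := hu.abs_le_sqrt_integral_sq hT1 ht
    _ ≤ sqrt ((exp (-(H₀ / 2)) * normE T H u'') ^ 2) :=
        sqrt_le_sqrt (hexp ▸ integral_sq_le_exp_neg_mul_normE_sq hT hH hH₀ hu.2.2.1)
    _ = exp (-(H₀ / 2)) * normE T H u'' := sqrt_sq (by unfold normE; positivity)

lemma rpow_abs_le {H₀ θ e : ℝ} {H : ℝ → ℝ} (hu : IsInE T u u' u'') (hT1 : T ≤ 1)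
    (hH : ContinuousOn H (Icc 0 T)) (hH₀ : ∀ t ∈ Icc 0 T, H₀ ≤ H t) (hθ : 0 ≤ θ)
    (he : exp (-(H₀ * θ) / 2) ≤ e) {t : ℝ} (ht : t ∈ Icc 0 T) :
    |u t| ^ θ ≤ e * normE T H u'' ^ θ := by
  have hX : 0 ≤ normE T H u'' := sqrt_nonneg _
  calc |u t| ^ θ ≤ (exp (-(H₀ / 2)) * normE T H u'') ^ θ :=
        rpow_le_rpow (abs_nonneg _) (hu.abs_le_exp_mul_normE hT1 hH hH₀ ht) hθ
    _ = exp (-(H₀ * θ) / 2) * normE T H u'' ^ θ := by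
        rw [mul_rpow (exp_pos _).le hX, ← exp_mul]; ring_nf
    _ ≤ e * normE T H u'' ^ θ := by gcongr

end IsInE

lemma integral_abs_rpow_sub_one_of_nonneg {θ v : ℝ} (hθ : 0 < θ) (hv : 0 ≤ v) :
    ∫ s in (0:ℝ)..v, |s| ^ (θ - 1) = v ^ θ / θ := by
  rw [intervalIntegral.integral_congr (g := fun s => s ^ (θ - 1)) fun s hs => by
      rw [uIcc_of_le hv] at hs; simp only [abs_of_nonneg hs.1],
    integral_rpow (Or.inl (by linarith)), sub_add_cancel, zero_rpow hθ.ne', sub_zero]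

lemma abs_integral_abs_rpow_sub_one {θ : ℝ} (hθ : 0 < θ) (v : ℝ) :
    |∫ s in (0:ℝ)..v, |s| ^ (θ - 1)| = |v| ^ θ / θ := by
  rcases le_or_gt 0 v with hv | hv
  · rw [integral_abs_rpow_sub_one_of_nonneg hθ hv, abs_of_nonneg hv,
      abs_of_nonneg (div_nonneg (rpow_nonneg hv _) hθ.le)]
  · have hneg := intervalIntegral.integral_comp_neg (a := 0) (b := -v) fun s => |s| ^ (θ - 1)
    simp only [abs_neg, neg_neg, neg_zero] at hneg
    rw [intervalIntegral.integral_symm, abs_neg, ← hneg,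
      integral_abs_rpow_sub_one_of_nonneg hθ (by linarith), abs_of_neg hv,
      abs_of_nonneg (div_nonneg (rpow_nonneg (by linarith) _) hθ.le)]

lemma abs_integral_le_of_abs_le_rpow_sub_one_add_one {f : ℝ → ℝ} {a θ : ℝ} (ha : 0 ≤ a)
    (hθ : 1 ≤ θ) (hf : ∀ s, |f s| ≤ a * (|s| ^ (θ - 1) + 1)) (v : ℝ) :
    |∫ s in (0:ℝ)..v, f s| ≤ a * (|v| ^ θ / θ + |v|) := by
  have hcont : Continuous fun s : ℝ => |s| ^ (θ - 1) :=
    continuous_abs.rpow_const fun _ => Or.inr (by linarith)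
  have hg : Continuous fun s : ℝ => a * (|s| ^ (θ - 1) + 1) :=
    continuous_const.mul (hcont.add continuous_const)
  calc |∫ s in (0:ℝ)..v, f s| ≤ |∫ s in (0:ℝ)..v, a * (|s| ^ (θ - 1) + 1)| :=
        (Real.norm_eq_abs _).symm.trans_le <| intervalIntegral.norm_integral_le_abs_of_norm_le
          (Filter.Eventually.of_forall fun s => (Real.norm_eq_abs _).trans_le (hf s))
          (hg.intervalIntegrable _ _)
    _ = a * |(∫ s in (0:ℝ)..v, |s| ^ (θ - 1)) + v| := by
        rw [intervalIntegral.integral_const_mul, intervalIntegral.integral_add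
          (hcont.intervalIntegrable _ _) intervalIntegrable_const, abs_mul, abs_of_nonneg ha]
        simp
    _ ≤ a * (|v| ^ θ / θ + |v|) := by
        rw [← abs_integral_abs_rpow_sub_one (by linarith) v]
        exact mul_le_mul_of_nonneg_left (abs_add_le _ _) ha

lemma rpow_le_mul_sq_add {θ δ X : ℝ} (hθ : 0 < θ) (hθ2 : θ < 2) (hδ : 0 < δ) (hX : 0 ≤ X) :
    X ^ θ ≤ δ * X ^ 2 + δ ^ (-(θ / (2 - θ))) := by
  -- split at `K = δ ^ (-1 / (2 - θ))`, the point where `δ K² = K ^ θ`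
  have h2θ : 2 - θ ≠ 0 := (sub_pos.2 hθ2).ne'
  set K : ℝ := δ ^ (-(1 / (2 - θ)))
  have hK : 0 < K := rpow_pos_of_pos hδ _
  have hKθ : K ^ θ = δ ^ (-(θ / (2 - θ))) := by
    rw [← rpow_mul hδ.le]; congr 1; ring
  have hK2 : K ^ (θ - 2) = δ := by
    rw [← rpow_mul hδ.le, show -(1 / (2 - θ)) * (θ - 2) = 1 by field_simp; ring, rpow_one]
  rcases le_or_gt X K with hXK | hXK
  · have := rpow_le_rpow hX hXK hθ.le
    nlinarith [sq_nonneg X]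
  · have hXpos := hK.trans hXK
    calc X ^ θ = X ^ (θ - 2) * X ^ 2 := by
          rw [← rpow_natCast, ← rpow_add hXpos]; norm_num
      _ ≤ δ * X ^ 2 := by
          rw [← hK2]
          exact mul_le_mul_of_nonneg_right
            (rpow_le_rpow_of_nonpos hK hXK.le (by linarith)) (sq_nonneg X)
      _ ≤ δ * X ^ 2 + δ ^ (-(θ / (2 - θ))) := le_add_of_nonneg_right (by positivity)

lemma exists_mul_rpow_le_mul_sq_add {a c θ : ℝ} (ha : 0 ≤ a) (hc : 0 < c) (hθ : 0 < θ)
    (hθ2 : θ < 2) : ∃ K, ∀ X, 0 ≤ X → a * X ^ θ ≤ c * X ^ 2 + K := by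
  set δ := c / (a + 1)
  have hδ : 0 < δ := by positivity
  have haδ : a * δ ≤ c := by
    rw [mul_div_assoc', div_le_iff₀ (by linarith)]; nlinarith
  refine ⟨a * δ ^ (-(θ / (2 - θ))), fun X hX => ?_⟩
  have := mul_le_mul_of_nonneg_left (rpow_le_mul_sq_add hθ hθ2 hδ hX) ha
  nlinarith [sq_nonneg X]

lemma exists_forall_half_mul_sq_sub_le {c a b d θ₁ θ₂ : ℝ} (hc : 0 < c) (ha : 0 ≤ a)
    (hb : 0 ≤ b) (hθ₁ : 0 < θ₁) (hθ₁' : θ₁ < 2) (hθ₂ : 0 < θ₂) (hθ₂' : θ₂ < 2) :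
    ∃ K, ∀ X, 0 ≤ X → c / 2 * X ^ 2 - K ≤ c * X ^ 2 - a * X ^ θ₁ - b * (X ^ θ₂ + 1) - d := by
  obtain ⟨K₁, hK₁⟩ := exists_mul_rpow_le_mul_sq_add ha (by positivity : 0 < c / 4) hθ₁ hθ₁'
  obtain ⟨K₂, hK₂⟩ := exists_mul_rpow_le_mul_sq_add hb (by positivity : 0 < c / 4) hθ₂ hθ₂'
  exact ⟨K₁ + K₂ + b + d, fun X hX => by linarith [hK₁ X hX, hK₂ X hX]⟩

lemma exists_pos_forall_le_mul_sq_sub {c : ℝ} (hc : 0 < c) (K M : ℝ) :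
    ∃ R, 0 < R ∧ ∀ X, R ≤ X → M ≤ c * X ^ 2 - K := by
  refine ⟨max 1 ((M + K) / c), lt_max_of_lt_left one_pos, fun X hX => ?_⟩
  have h1 : 1 ≤ X := le_of_max_le_left hX
  have h2 : M + K ≤ c * X := (div_le_iff₀' hc).1 (le_of_max_le_right hX)
  nlinarith [mul_nonneg (mul_nonneg hc.le (by linarith : (0:ℝ) ≤ X)) (sub_nonneg.2 h1)]

section Estimates

variable {T H₀ M₁ : ℝ} {N : ℕ} {ss tt : ℕ → ℝ} {H u u' u'' : ℝ → ℝ}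

lemma IsInE.mul_normE_sq_le (hu : IsInE T u u' u'') (hT : 0 ≤ T)
    (hH : ContinuousOn H (Icc 0 T)) (hH₀ : ∀ t ∈ Icc 0 T, H₀ ≤ H t) (β : ℝ) :
    (1 / 2 - max β 0 * T ^ 2 / (4 * exp H₀)) * normE T H u'' ^ 2 ≤
      1 / 2 * (∫ x in (0:ℝ)..T, exp (H x) * |u'' x| ^ 2)
        - β / 2 * ∫ x in (0:ℝ)..T, |u' x| ^ 2 := by
  have hD : 0 ≤ ∫ x in (0:ℝ)..T, |u' x| ^ 2 :=
    intervalIntegral.integral_nonneg hT fun _ _ => by positivity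
  have hβ : β / 2 * ∫ x in (0:ℝ)..T, |u' x| ^ 2
      ≤ max β 0 * T ^ 2 / (4 * exp H₀) * normE T H u'' ^ 2 :=
    calc β / 2 * ∫ x in (0:ℝ)..T, |u' x| ^ 2
        ≤ max β 0 / 2 * ∫ x in (0:ℝ)..T, |u' x| ^ 2 := by gcongr; exact le_max_left _ _
      _ ≤ max β 0 / 2 * (T ^ 2 / 2 * (exp (-H₀) * normE T H u'' ^ 2)) := by
          gcongr
          exact (hu.integral_sq_deriv_le hT).trans (by
            gcongr; exact integral_sq_le_exp_neg_mul_normE_sq hT hH hH₀ hu.2.2.1)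
      _ = max β 0 * T ^ 2 / (4 * exp H₀) * normE T H u'' ^ 2 := by
          rw [exp_neg]; field_simp; ring
  rw [← normE_sq hT]
  linarith

lemma abs_sum_integral_exp_mul_le_rpow_normE (P : IsImpulsivePartition T N ss tt) (hT1 : T ≤ 1)
    (hu : IsInE T u u' u'') (hH : ContinuousOn H (Icc 0 T)) (hH₀ : ∀ t ∈ Icc 0 T, H₀ ≤ H t)
    (hM : ∀ t ∈ Icc 0 T, exp (H t) ≤ M₁) {θ A e : ℝ} (hθ : 1 ≤ θ) (hA : 0 ≤ A)
    (he : exp (-(H₀ * θ) / 2) ≤ e) {F : ℕ → ℝ → ℝ → ℝ}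
    (hF : ∀ i ≤ N, ∀ t ∈ Ioc (ss i) (tt (i + 1)), ∀ v : ℝ, |F i t v| ≤ (A / θ) * |v| ^ θ) :
    |∑ i ∈ Finset.range (N + 1), ∫ x in (ss i)..(tt (i + 1)), exp (H x) * F i x (u x)|
      ≤ M₁ * A * T * e * normE T H u'' ^ θ := by
  suffices h : ∀ i ≤ N, ∀ x ∈ Ioc (ss i) (tt (i + 1)),
      |exp (H x) * F i x (u x)| ≤ M₁ * A * e * normE T H u'' ^ θ by
    have := P.abs_sum_integral_le h
    linarith
  intro i hi x hx
  have hxT := P.Ioc_subset_Icc hi hx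
  rw [abs_mul, abs_of_pos (exp_pos _)]
  calc exp (H x) * |F i x (u x)| ≤ M₁ * (A * (e * normE T H u'' ^ θ)) := by
        refine mul_le_mul (hM x hxT) ?_ (abs_nonneg _) ((exp_pos _).le.trans (hM x hxT))
        calc |F i x (u x)| ≤ A / θ * |u x| ^ θ := hF i hi x hx (u x)
          _ ≤ A * (e * normE T H u'' ^ θ) := by
              gcongr
              · exact div_le_self hA (by linarith)
              · exact hu.rpow_abs_le hT1 hH hH₀ (by linarith) he hxT
    _ = M₁ * A * e * normE T H u'' ^ θ := by ring

lemma abs_sum_integral_impulse_le (P : IsImpulsivePartition T N ss tt) (hT1 : T ≤ 1)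
    (hu : IsInE T u u' u'') (hH : ContinuousOn H (Icc 0 T)) (hH₀ : ∀ t ∈ Icc 0 T, H₀ ≤ H t)
    (hH₀0 : H₀ ≤ 0) (hM : ∀ t ∈ Icc 0 T, exp (H t) ≤ M₁) {θ a e : ℝ} (hθ : 1 < θ) (ha : 0 ≤ a)
    (he : exp (-(H₀ * θ) / 2) ≤ e) {I : ℕ → ℝ → ℝ}
    (hI : ∀ i, 1 ≤ i → i ≤ N → ∀ v : ℝ, |I i v| ≤ a * (|v| ^ (θ - 1) + 1)) :
    |∑ i ∈ Finset.Icc 1 N, ∫ s in (0:ℝ)..(u (tt i)), exp (H (tt i)) * I i s|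
      ≤ N * M₁ * a * ((θ + 1) / θ) * e * (normE T H u'' ^ θ + 1) := by
  set X := normE T H u''
  have hX : 0 ≤ X := sqrt_nonneg _
  have hXθ : X ≤ X ^ θ + 1 := by
    rcases le_or_gt X 1 with hX1 | hX1
    · linarith [rpow_nonneg hX θ]
    · linarith [self_le_rpow_of_one_le hX1.le hθ.le]
  have he₀ : exp (-(H₀ / 2)) ≤ e :=
    le_trans (exp_le_exp.2 (by nlinarith)) he
  have he0 : 0 ≤ e := (exp_pos _).le.trans he₀
  have hterm : ∀ i ∈ Finset.Icc 1 N, |∫ s in (0:ℝ)..(u (tt i)), exp (H (tt i)) * I i s|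
      ≤ M₁ * a * ((θ + 1) / θ) * e * (X ^ θ + 1) := by
    intro i hi
    obtain ⟨hi1, hiN⟩ := Finset.mem_Icc.1 hi
    obtain ⟨j, rfl⟩ : ∃ j, i = j + 1 := ⟨i - 1, by omega⟩
    have ht : tt (j + 1) ∈ Icc 0 T := P.Ioc_subset_Icc (by omega) ⟨P.ss_lt_tt j (by omega), le_rfl⟩
    set v := u (tt (j + 1))
    have hv : |v| ≤ e * X := (hu.abs_le_exp_mul_normE hT1 hH hH₀ ht).trans (by gcongr)
    have hvθ : |v| ^ θ ≤ e * X ^ θ := hu.rpow_abs_le hT1 hH hH₀ (by linarith) he ht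
    have hM₁ : 0 ≤ M₁ := (exp_pos _).le.trans (hM _ ht)
    rw [intervalIntegral.integral_const_mul, abs_mul, abs_of_pos (exp_pos _)]
    calc exp (H (tt (j + 1))) * |∫ s in (0:ℝ)..v, I (j + 1) s|
        ≤ M₁ * (a * (|v| ^ θ / θ + |v|)) :=
          mul_le_mul (hM _ ht) (abs_integral_le_of_abs_le_rpow_sub_one_add_one ha hθ.le
            (hI (j + 1) hi1 hiN) v) (abs_nonneg _) hM₁
      _ ≤ M₁ * (a * (e * X ^ θ / θ + e * (X ^ θ + 1))) := by
          gcongr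
          exact hv.trans (by gcongr)
      _ = M₁ * a * ((θ + 1) / θ) * e * (X ^ θ + 1) - M₁ * a * (e / θ) := by
          field_simp; ring
      _ ≤ M₁ * a * ((θ + 1) / θ) * e * (X ^ θ + 1) :=
          sub_le_self _ (mul_nonneg (mul_nonneg hM₁ ha) (div_nonneg he0 (by linarith)))
  calc _ ≤ ∑ i ∈ Finset.Icc 1 N, |∫ s in (0:ℝ)..(u (tt i)), exp (H (tt i)) * I i s| :=
        Finset.abs_sum_le_sum_abs _ _
    _ ≤ (Finset.Icc 1 N).card • (M₁ * a * ((θ + 1) / θ) * e * (X ^ θ + 1)) :=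
        Finset.sum_le_card_nsmul _ _ _ hterm
    _ = N * M₁ * a * ((θ + 1) / θ) * e * (X ^ θ + 1) := by
        rw [Nat.card_Icc, add_tsub_cancel_right, nsmul_eq_mul]; ring

lemma abs_mul_sum_integral_le (P : IsImpulsivePartition T N ss tt)
    (hM : ∀ t ∈ Icc 0 T, exp (H t) ≤ M₁) {ε C : ℝ} (hε : |ε| ≤ 1) {G : ℕ → ℝ → ℝ → ℝ}
    (hG : ∀ i ≤ N, ∀ t ∈ Ioc (ss i) (tt (i + 1)), ∀ v : ℝ, |G i t v| ≤ C) (u : ℝ → ℝ) :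
    |ε * ∑ i ∈ Finset.range (N + 1), ∫ x in (ss i)..(tt (i + 1)), exp (H x) * G i x (u x)|
      ≤ (N + 1) * M₁ * T * C := by
  have hS := P.abs_sum_integral_le (f := fun i x => exp (H x) * G i x (u x)) (C := M₁ * C)
    fun i hi x hx => by
      have hxT := P.Ioc_subset_Icc hi hx
      rw [abs_mul, abs_of_pos (exp_pos _)]
      exact mul_le_mul (hM x hxT) (hG i hi x hx (u x)) (abs_nonneg _)
        ((exp_pos _).le.trans (hM x hxT))
  have hN : (1:ℝ) ≤ N + 1 := by linarith [N.cast_nonneg (α := ℝ)]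
  calc _ = |ε| * |∑ i ∈ Finset.range (N + 1), ∫ x in (ss i)..(tt (i + 1)),
        exp (H x) * G i x (u x)| := abs_mul _ _
    _ ≤ 1 * (M₁ * C * T) := mul_le_mul hε hS (abs_nonneg _) zero_le_one
    _ ≤ (N + 1) * (M₁ * C * T) := mul_le_mul_of_nonneg_right hN ((abs_nonneg _).trans hS)
    _ = (N + 1) * M₁ * T * C := by ring

end Estimates

theorem stmt10_general
    (T : ℝ) (hT0 : 0 < T) (hT1 : T ≤ 1)
    (N : ℕ)
    (ss tt : ℕ → ℝ)
    (hs0 : ss 0 = 0) (htN : tt (N + 1) = T)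
    (hst : ∀ i ≤ N, ss i < tt (i + 1))
    (hts : ∀ i, 1 ≤ i → i ≤ N → tt i < ss i)
    (h : ℝ → ℝ) (hh : ContinuousOn h (Icc 0 T))
    (H : ℝ → ℝ) (hH : ∀ t, H t = ∫ τ in (0:ℝ)..t, h τ)
    (H₀ : ℝ) (hH₀ : IsLeast (H '' Icc 0 T) H₀)
    (M₁ : ℝ) (hM₁ : IsGreatest ((fun t => Real.exp (H t)) '' Icc 0 T) M₁)
    (β : ℝ) (hβ : β < 2 * Real.exp H₀ / T ^ 2)
    (θ₁ θ₂ A₁ a₂ CG : ℝ)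
    (hθ₁ : 1 < θ₁) (hθ₁' : θ₁ < 2) (hθ₂ : 1 < θ₂) (hθ₂' : θ₂ < 2)
    (hA₁ : 0 < A₁) (ha₂ : 0 < a₂)
    (estar : ℝ)
    (hestar : estar = max (Real.exp (-(H₀ * θ₁) / 2)) (Real.exp (-(H₀ * θ₂) / 2)))
    (Ftilde Gtilde : ℕ → ℝ → ℝ → ℝ)
    (hFt_bound : ∀ i ≤ N, ∀ t ∈ Ioc (ss i) (tt (i + 1)), ∀ v : ℝ,
      |Ftilde i t v| ≤ (A₁ / θ₁) * |v| ^ θ₁)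
    (hGt_bound : ∀ i ≤ N, ∀ t ∈ Ioc (ss i) (tt (i + 1)), ∀ v : ℝ,
      |Gtilde i t v| ≤ CG)
    (Itilde : ℕ → ℝ → ℝ)
    (hIt_bound : ∀ i, 1 ≤ i → i ≤ N → ∀ v : ℝ,
      |Itilde i v| ≤ a₂ * (|v| ^ (θ₂ - 1) + 1))
    (J : ℝ → (ℝ → ℝ) → (ℝ → ℝ) → (ℝ → ℝ) → ℝ)
    (hJ : ∀ (ε : ℝ) (u u' u'' : ℝ → ℝ), J ε u u' u'' =
      (1 / 2) * (∫ x in (0:ℝ)..T, Real.exp (H x) * |u'' x| ^ 2)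
      - (β / 2) * (∫ x in (0:ℝ)..T, |u' x| ^ 2)
      - (∑ i ∈ Finset.range (N + 1),
          ∫ x in (ss i)..(tt (i + 1)), Real.exp (H x) * Ftilde i x (u x))
      - (∑ i ∈ Finset.Icc 1 N,
          ∫ s in (0:ℝ)..(u (tt i)), Real.exp (H (tt i)) * Itilde i s)
      - ε * ∑ i ∈ Finset.range (N + 1),
          ∫ x in (ss i)..(tt (i + 1)), Real.exp (H x) * Gtilde i x (u x)) :
    (∀ ε ∈ Icc (0:ℝ) 1, ∀ u u' u'' : ℝ → ℝ, IsInE T u u' u'' →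
      J ε u u' u'' ≥
        (1 / 2 - max β 0 * T ^ 2 / (4 * Real.exp H₀)) * (normE T H u'') ^ 2
        - M₁ * A₁ * T * estar * (normE T H u'') ^ θ₁
        - (N : ℝ) * M₁ * a₂ * ((θ₂ + 1) / θ₂) * estar * ((normE T H u'') ^ θ₂ + 1)
        - ((N : ℝ) + 1) * M₁ * T * CG) ∧
    (∃ C : ℝ, ∀ ε ∈ Icc (0:ℝ) 1, ∀ u u' u'' : ℝ → ℝ, IsInE T u u' u'' →
      C ≤ J ε u u' u'') ∧
    (∀ M : ℝ, ∃ R : ℝ, 0 < R ∧ ∀ ε ∈ Icc (0:ℝ) 1, ∀ u u' u'' : ℝ → ℝ,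
      IsInE T u u' u'' → R ≤ normE T H u'' → M ≤ J ε u u' u'') := by
  have P : IsImpulsivePartition T N ss tt := ⟨hs0, htN, hst, hts⟩
  have hHc : ContinuousOn H (Icc 0 T) := by
    have := intervalIntegral.continuousOn_primitive_interval (μ := volume) (a := 0) (b := T)
      (by rw [uIcc_of_le hT0.le]; exact hh.integrableOn_Icc)
    rwa [uIcc_of_le hT0.le, ← funext hH] at this
  have hHlow : ∀ t ∈ Icc 0 T, H₀ ≤ H t := fun t ht => hH₀.2 ⟨t, ht, rfl⟩
  have hH₀0 : H₀ ≤ 0 := by simpa [hH] using hHlow 0 ⟨le_rfl, hT0.le⟩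
  have hM : ∀ t ∈ Icc 0 T, exp (H t) ≤ M₁ := fun t ht => hM₁.2 ⟨t, ht, rfl⟩
  have hM₁0 : 0 < M₁ := (exp_pos _).trans_le (hM 0 ⟨le_rfl, hT0.le⟩)
  have he₁ : exp (-(H₀ * θ₁) / 2) ≤ estar := hestar ▸ le_max_left _ _
  have he₂ : exp (-(H₀ * θ₂) / 2) ≤ estar := hestar ▸ le_max_right _ _
  have hestar0 : 0 < estar := (exp_pos _).trans_le he₁
  have hlower : ∀ ε ∈ Icc (0:ℝ) 1, ∀ u u' u'' : ℝ → ℝ, IsInE T u u' u'' →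
      J ε u u' u'' ≥
        (1 / 2 - max β 0 * T ^ 2 / (4 * Real.exp H₀)) * (normE T H u'') ^ 2
        - M₁ * A₁ * T * estar * (normE T H u'') ^ θ₁
        - (N : ℝ) * M₁ * a₂ * ((θ₂ + 1) / θ₂) * estar * ((normE T H u'') ^ θ₂ + 1)
        - ((N : ℝ) + 1) * M₁ * T * CG := by
    intro ε hε u u' u'' hu
    have hQ := hu.mul_normE_sq_le hT0.le hHc hHlow β
    have hF := abs_sum_integral_exp_mul_le_rpow_normE P hT1 hu hHc hHlow hM hθ₁.le hA₁.le he₁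
      hFt_bound
    have hI := abs_sum_integral_impulse_le P hT1 hu hHc hHlow hH₀0 hM hθ₂ ha₂.le he₂ hIt_bound
    have hG := abs_mul_sum_integral_le P hM (abs_le.2 ⟨by linarith [hε.1], hε.2⟩) hGt_bound u
    rw [hJ]
    linarith [(abs_le.1 hF).2, (abs_le.1 hI).2, (abs_le.1 hG).2]
  set c := 1 / 2 - max β 0 * T ^ 2 / (4 * Real.exp H₀)
  have hc : 0 < c := by
    have : max β 0 * T ^ 2 < 2 * exp H₀ :=
      (lt_div_iff₀ (by positivity)).1 (max_lt hβ (by positivity))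
    rw [sub_pos, div_lt_iff₀ (by positivity)]
    linarith
  obtain ⟨K, hK⟩ := exists_forall_half_mul_sq_sub_le hc (a := M₁ * A₁ * T * estar)
    (b := N * M₁ * a₂ * ((θ₂ + 1) / θ₂) * estar) (d := (N + 1) * M₁ * T * CG)
    (by positivity) (by positivity) (by linarith) hθ₁' (by linarith) hθ₂'
  have hcoercive : ∀ ε ∈ Icc (0:ℝ) 1, ∀ u u' u'' : ℝ → ℝ, IsInE T u u' u'' →
      c / 2 * normE T H u'' ^ 2 - K ≤ J ε u u' u'' := fun ε hε u u' u'' hu =>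
    (hK _ (sqrt_nonneg _)).trans (hlower ε hε u u' u'' hu)
  refine ⟨hlower, ⟨-K, fun ε hε u u' u'' hu => ?_⟩, fun M => ?_⟩
  · nlinarith [hcoercive ε hε u u' u'' hu, sq_nonneg (normE T H u'')]
  · obtain ⟨R, hR, hRM⟩ := exists_pos_forall_le_mul_sq_sub (half_pos hc) K M
    exact ⟨R, hR, fun ε hε u u' u'' hu hX => (hRM _ hX).trans (hcoercive ε hε u u' u'' hu)⟩

theorem stmt10
    (T : ℝ) (hT0 : 0 < T) (hT1 : T ≤ 1)
    (N : ℕ) (hN : 1 ≤ N)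
    (ss tt : ℕ → ℝ)
    (hs0 : ss 0 = 0) (htN : tt (N + 1) = T)
    (hst : ∀ i ≤ N, ss i < tt (i + 1))
    (hts : ∀ i, 1 ≤ i → i ≤ N → tt i < ss i)
    (h : ℝ → ℝ) (hh : ContinuousOn h (Icc 0 T))
    (H : ℝ → ℝ) (hH : ∀ t, H t = ∫ τ in (0:ℝ)..t, h τ)
    (H₀ : ℝ) (hH₀ : IsLeast (H '' Icc 0 T) H₀)
    (M₁ : ℝ) (hM₁ : IsGreatest ((fun t => Real.exp (H t)) '' Icc 0 T) M₁)
    (β : ℝ) (hβ : β < 2 * Real.exp H₀ / T ^ 2)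
    (θ₁ θ₂ A₁ a₂ CG : ℝ)
    (hθ₁ : 1 < θ₁) (hθ₁' : θ₁ < 2) (hθ₂ : 1 < θ₂) (hθ₂' : θ₂ < 2)
    (hA₁ : 0 < A₁) (ha₂ : 0 < a₂) (hCG : 0 < CG)
    (estar : ℝ)
    (hestar : estar = max (Real.exp (-(H₀ * θ₁) / 2)) (Real.exp (-(H₀ * θ₂) / 2)))
    (Ftilde Gtilde : ℕ → ℝ → ℝ → ℝ)
    (hFt_cont : ∀ i ≤ N, Continuous (Function.uncurry (Ftilde i)))
    (hGt_cont : ∀ i ≤ N, Continuous (Function.uncurry (Gtilde i)))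
    (hFt_bound : ∀ i ≤ N, ∀ t ∈ Ioc (ss i) (tt (i + 1)), ∀ v : ℝ,
      |Ftilde i t v| ≤ (A₁ / θ₁) * |v| ^ θ₁)
    (hGt_bound : ∀ i ≤ N, ∀ t ∈ Ioc (ss i) (tt (i + 1)), ∀ v : ℝ,
      |Gtilde i t v| ≤ CG)
    (Itilde : ℕ → ℝ → ℝ)
    (hIt_cont : ∀ i, 1 ≤ i → i ≤ N → Continuous (Itilde i))
    (hIt_bound : ∀ i, 1 ≤ i → i ≤ N → ∀ v : ℝ,
      |Itilde i v| ≤ a₂ * (|v| ^ (θ₂ - 1) + 1))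
    (J : ℝ → (ℝ → ℝ) → (ℝ → ℝ) → (ℝ → ℝ) → ℝ)
    (hJ : ∀ (ε : ℝ) (u u' u'' : ℝ → ℝ), J ε u u' u'' =
      (1 / 2) * (∫ x in (0:ℝ)..T, Real.exp (H x) * |u'' x| ^ 2)
      - (β / 2) * (∫ x in (0:ℝ)..T, |u' x| ^ 2)
      - (∑ i ∈ Finset.range (N + 1),
          ∫ x in (ss i)..(tt (i + 1)), Real.exp (H x) * Ftilde i x (u x))
      - (∑ i ∈ Finset.Icc 1 N,
          ∫ s in (0:ℝ)..(u (tt i)), Real.exp (H (tt i)) * Itilde i s)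
      - ε * ∑ i ∈ Finset.range (N + 1),
          ∫ x in (ss i)..(tt (i + 1)), Real.exp (H x) * Gtilde i x (u x)) :
    (∀ ε ∈ Icc (0:ℝ) 1, ∀ u u' u'' : ℝ → ℝ, IsInE T u u' u'' →
      J ε u u' u'' ≥
        (1 / 2 - max β 0 * T ^ 2 / (4 * Real.exp H₀)) * (normE T H u'') ^ 2
        - M₁ * A₁ * T * estar * (normE T H u'') ^ θ₁
        - (N : ℝ) * M₁ * a₂ * ((θ₂ + 1) / θ₂) * estar * ((normE T H u'') ^ θ₂ + 1)
        - ((N : ℝ) + 1) * M₁ * T * CG) ∧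
    (∃ C : ℝ, ∀ ε ∈ Icc (0:ℝ) 1, ∀ u u' u'' : ℝ → ℝ, IsInE T u u' u'' →
      C ≤ J ε u u' u'') ∧
    (∀ M : ℝ, ∃ R : ℝ, 0 < R ∧ ∀ ε ∈ Icc (0:ℝ) 1, ∀ u u' u'' : ℝ → ℝ,
      IsInE T u u' u'' → R ≤ normE T H u'' → M ≤ J ε u u' u'') :=
  stmt10_general T hT0 hT1 N ss tt hs0 htN hst hts h hh H hH H₀ hH₀ M₁ hM₁ β hβ θ₁ θ₂ A₁ a₂ CG hθ₁
    hθ₁' hθ₂ hθ₂' hA₁ ha₂ estar hestar Ftilde Gtilde hFt_bound hGt_bound Itilde hIt_bound J hJ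
end

section
/- Define f₁ : ℝ → ℝ by f₁(u) = |u|^{−1/2}·u·(1 + (1/10)·sin|u|) for u ≠ 0 and f₁(0) = 0, and set F₁(u) = ∫₀^u f₁(s) ds = (2/3)|u|^{3/2} + (1/10)·∫₀^u |s|^{1/2}·sin(s) ds. Then for every u ∈ ℝ with u ≠ 0, u·f₁(u) − 2·F₁(u) < 0. -/
/-!
Split `f₁ s = |s| ^ (-1/2) * s + (1/10) |s| ^ (1/2) sin s`. The first summand is the derivative
of `(2/3) |s| ^ (3/2)`, which gives the formula for `F₁`, and `u f₁ u = |u| ^ (3/2) (1 + sin |u| / 10)`.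
Bounding the integrand `|s| ^ (1/2) sin s` by `|u| ^ (1/2)` between `0` and `u` gives
`u f₁ u - 2 F₁ u ≤ (1 + 1/10 - 4/3 + 1/5) |u| ^ (3/2) = -|u| ^ (3/2) / 30 < 0`.
-/

open Real MeasureTheory intervalIntegral

lemma mul_sin_abs (s : ℝ) : s * sin |s| = |s| * sin s := by
  rcases abs_cases s with ⟨h, -⟩ | ⟨h, -⟩ <;> simp [h, sin_neg]

lemma abs_rpow_sub_one_mul_mul_sin_abs (p s : ℝ) :
    |s| ^ (p - 1) * s * sin |s| = |s| ^ p * sin s := by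
  rcases eq_or_ne s 0 with rfl | hs
  · simp
  · rw [mul_assoc, mul_sin_abs, ← mul_assoc, rpow_sub_one (abs_ne_zero.2 hs),
      div_mul_cancel₀ _ (abs_ne_zero.2 hs)]

lemma mul_abs_rpow_sub_two_mul_self (p : ℝ) {u : ℝ} (hu : u ≠ 0) :
    u * (|u| ^ (p - 2) * u) = |u| ^ p := by
  rw [rpow_sub (abs_pos.2 hu), rpow_two, sq_abs]
  field_simp

lemma continuous_abs_rpow_sub_two_mul {p : ℝ} (hp : 1 < p) :
    Continuous fun x : ℝ => |x| ^ (p - 2) * x := by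
  have h := (contDiff_norm_rpow (E := ℝ) hp).continuous_deriv le_rfl
  rw [funext fun x => (hasDerivAt_norm_rpow x hp).deriv] at h
  simpa [mul_assoc, (zero_lt_one.trans hp).ne'] using h.const_mul p⁻¹

lemma integral_abs_rpow_sub_two_mul {p : ℝ} (hp : 1 < p) (a b : ℝ) :
    ∫ x in a..b, |x| ^ (p - 2) * x = (|b| ^ p - |a| ^ p) / p := by
  rw [integral_eq_sub_of_hasDerivAt (f := fun x => |x| ^ p / p) (fun x _ => ?_)
    ((continuous_abs_rpow_sub_two_mul hp).intervalIntegrable a b), sub_div]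
  refine ((hasDerivAt_abs_rpow x hp).div_const p).congr_deriv ?_
  field_simp [(zero_lt_one.trans hp).ne']

lemma abs_integral_abs_rpow_mul_sin_le {r : ℝ} (hr : 0 ≤ r) (u : ℝ) :
    |∫ s in (0:ℝ)..u, |s| ^ r * sin s| ≤ |u| ^ (r + 1) := by
  have h := norm_integral_le_of_norm_le_const (a := 0) (b := u) (C := |u| ^ r)
    (f := fun s => |s| ^ r * sin s) fun s hs => ?_
  · simpa [rpow_add_one' (abs_nonneg u) (by positivity : r + 1 ≠ 0)] using h
  have hsu : |s| ≤ |u| := by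
    rw [abs_le]
    rcases Set.mem_uIoc.1 hs with ⟨h1, h2⟩ | ⟨h1, h2⟩ <;> constructor <;>
      linarith [neg_abs_le u, le_abs_self u, abs_nonneg u]
  calc ‖|s| ^ r * sin s‖ = |s| ^ r * |sin s| := by
        rw [norm_mul, norm_of_nonneg (by positivity), norm_eq_abs]
    _ ≤ |s| ^ r := mul_le_of_le_one_right (by positivity) (abs_sin_le_one s)
    _ ≤ |u| ^ r := rpow_le_rpow (abs_nonneg s) hsu hr

lemma continuous_abs_rpow_neg_half_mul : Continuous fun s : ℝ => |s| ^ (-(1:ℝ)/2) * s := by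
  simpa [show (3/2 : ℝ) - 2 = -1/2 by norm_num] using
    continuous_abs_rpow_sub_two_mul (p := 3/2) (by norm_num)

lemma integral_abs_rpow_neg_half_mul (u : ℝ) :
    ∫ s in (0:ℝ)..u, |s| ^ (-(1:ℝ)/2) * s = (2/3) * |u| ^ ((3:ℝ)/2) := by
  have h := integral_abs_rpow_sub_two_mul (p := 3/2) (by norm_num) 0 u
  rw [show (3/2 : ℝ) - 2 = -1/2 by norm_num] at h
  rw [h]
  norm_num
  ring

lemma continuous_abs_rpow_half_mul_sin : Continuous fun s : ℝ => |s| ^ ((1:ℝ)/2) * sin s :=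
  (continuous_abs.rpow_const fun _ => Or.inr (by norm_num)).mul continuous_sin

theorem stmt15
    (f₁ : ℝ → ℝ)
    (hf₁ : ∀ u : ℝ, u ≠ 0 →
      f₁ u = |u| ^ (-(1:ℝ)/2) * u * (1 + (1/10 : ℝ) * Real.sin |u|))
    (hf₁0 : f₁ 0 = 0)
    (F₁ : ℝ → ℝ)
    (hF₁ : ∀ u : ℝ, F₁ u = ∫ s in (0:ℝ)..u, f₁ s) :
    ∀ u : ℝ,
      (F₁ u = (2/3 : ℝ) * |u| ^ ((3:ℝ)/2)
        + (1/10 : ℝ) * ∫ s in (0:ℝ)..u, |s| ^ ((1:ℝ)/2) * Real.sin s) ∧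
      (u ≠ 0 → u * f₁ u - 2 * F₁ u < 0) := by
  have hf₁_eq (s : ℝ) : f₁ s = |s| ^ (-(1:ℝ)/2) * s + (1/10) * (|s| ^ ((1:ℝ)/2) * sin s) := by
    rcases eq_or_ne s 0 with rfl | hs
    · simp [hf₁0]
    · have h := abs_rpow_sub_one_mul_mul_sin_abs (1/2) s
      rw [show (1/2 : ℝ) - 1 = -1/2 by norm_num] at h
      rw [hf₁ s hs]
      linear_combination (1/10 : ℝ) * h
  have hF₁_eq (u : ℝ) : F₁ u = (2/3 : ℝ) * |u| ^ ((3:ℝ)/2)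
      + (1/10 : ℝ) * ∫ s in (0:ℝ)..u, |s| ^ ((1:ℝ)/2) * sin s := by
    simp_rw [hF₁, hf₁_eq]
    rw [integral_add (continuous_abs_rpow_neg_half_mul.intervalIntegrable 0 u)
        ((continuous_abs_rpow_half_mul_sin.intervalIntegrable 0 u).const_mul _),
      intervalIntegral.integral_const_mul, integral_abs_rpow_neg_half_mul]
  refine fun u => ⟨hF₁_eq u, fun hu => ?_⟩
  have huf : u * f₁ u = |u| ^ ((3:ℝ)/2) * (1 + (1/10) * sin |u|) := by
    have h := mul_abs_rpow_sub_two_mul_self (3/2) hu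
    rw [show (3/2 : ℝ) - 2 = -1/2 by norm_num] at h
    rw [hf₁ u hu, ← h]
    ring
  have hI := abs_le.1 (abs_integral_abs_rpow_mul_sin_le (r := 1/2) (by norm_num) u)
  rw [show (1/2 : ℝ) + 1 = 3/2 by norm_num] at hI
  have hpos : 0 < |u| ^ ((3:ℝ)/2) := by positivity
  rw [huf, hF₁_eq u]
  linarith [mul_le_mul_of_nonneg_left (sin_le_one |u|) hpos.le]
end

section
/- Define F₁ : ℝ → ℝ by F₁(u) = (2/3)|u|^{3/2} + (1/10)·∫₀^u |s|^{1/2}·sin(s) ds. Then F₁(u)/u² tends to +∞ as u tends to 0 with u ≠ 0. -/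
open Real MeasureTheory Filter Topology

theorem stmt16
    (F₁ : ℝ → ℝ)
    (hF₁ : ∀ u : ℝ, F₁ u = (2/3 : ℝ) * |u| ^ ((3:ℝ)/2)
      + (1/10 : ℝ) * ∫ s in (0:ℝ)..u, |s| ^ ((1:ℝ)/2) * Real.sin s) :
    Tendsto (fun u : ℝ => F₁ u / u ^ 2) (𝓝[≠] 0) atTop := by
  have key : ∀ᶠ u in 𝓝[≠] (0:ℝ),
      (1/3 : ℝ) * |u| ^ (-(1:ℝ)/2) ≤ F₁ u / u ^ 2 := by
    have hmem : {u : ℝ | |u| < 1} ∈ 𝓝[≠] (0:ℝ) := by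
      apply nhdsWithin_le_nhds
      have : Metric.ball (0:ℝ) 1 ∈ 𝓝 (0:ℝ) := Metric.ball_mem_nhds _ one_pos
      simpa [Metric.ball, Real.dist_eq] using this
    filter_upwards [hmem, self_mem_nhdsWithin] with u hu1 hune
    have habs : (0:ℝ) < |u| := abs_pos.2 hune
    -- bound the integral
    have hI : |∫ s in (0:ℝ)..u, |s| ^ ((1:ℝ)/2) * Real.sin s| ≤ |u| ^ ((3:ℝ)/2) := by
      have hb : ∀ x ∈ Set.uIoc (0:ℝ) u,
          ‖|x| ^ ((1:ℝ)/2) * Real.sin x‖ ≤ |u| ^ ((1:ℝ)/2) := by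
        intro x hx
        have hmem := Set.uIoc_subset_uIcc hx
        have hxu : |x| ≤ |u| := by
          rw [Set.uIcc_eq_union] at hmem
          rcases hmem with h | h
          · rw [abs_le]; constructor
            · linarith [h.1, neg_abs_le u]
            · linarith [h.2, le_abs_self u]
          · rw [abs_le]; constructor
            · linarith [h.1, neg_abs_le u]
            · linarith [h.2, le_abs_self u]
        have h1 : |x| ^ ((1:ℝ)/2) ≤ |u| ^ ((1:ℝ)/2) :=
          Real.rpow_le_rpow (abs_nonneg x) hxu (by norm_num)
        have h2 : |Real.sin x| ≤ 1 := Real.abs_sin_le_one x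
        calc ‖|x| ^ ((1:ℝ)/2) * Real.sin x‖
            = |x| ^ ((1:ℝ)/2) * |Real.sin x| := by
              rw [norm_mul, Real.norm_eq_abs, Real.norm_eq_abs,
                abs_of_nonneg (Real.rpow_nonneg (abs_nonneg x) _)]
          _ ≤ |u| ^ ((1:ℝ)/2) * 1 := by
              apply mul_le_mul h1 h2 (abs_nonneg _)
                (Real.rpow_nonneg (abs_nonneg u) _)
          _ = |u| ^ ((1:ℝ)/2) := mul_one _
      have := intervalIntegral.norm_integral_le_of_norm_le_const hb
      rw [Real.norm_eq_abs] at this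
      calc |∫ s in (0:ℝ)..u, |s| ^ ((1:ℝ)/2) * Real.sin s|
          ≤ |u| ^ ((1:ℝ)/2) * |u - 0| := this
        _ = |u| ^ ((3:ℝ)/2) := by
            rw [sub_zero, ← Real.rpow_add_one habs.ne' ((1:ℝ)/2)]
            norm_num
    have hF : (1/3 : ℝ) * |u| ^ ((3:ℝ)/2) ≤ F₁ u := by
      rw [hF₁ u]
      have h1 : -(|u| ^ ((3:ℝ)/2)) ≤ ∫ s in (0:ℝ)..u, |s| ^ ((1:ℝ)/2) * Real.sin s :=
        neg_le_of_abs_le hI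
      nlinarith [Real.rpow_nonneg (abs_nonneg u) ((3:ℝ)/2)]
    have hu2 : (0:ℝ) < u ^ 2 := by rw [← sq_abs]; exact pow_pos habs 2
    rw [le_div_iff₀ hu2]
    have heq : (1/3 : ℝ) * |u| ^ (-(1:ℝ)/2) * u ^ 2 = (1/3 : ℝ) * |u| ^ ((3:ℝ)/2) := by
      rw [← sq_abs u, ← Real.rpow_two, mul_assoc, ← Real.rpow_add habs]
      norm_num
    rw [heq]; exact hF
  refine tendsto_atTop_mono' _ key ?_
  have h1 : Tendsto (fun u : ℝ => |u|) (𝓝[≠] 0) (𝓝[>] 0) := by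
    apply tendsto_nhdsWithin_of_tendsto_nhds_of_eventually_within
    · have h0 : Tendsto (fun u : ℝ => |u|) (𝓝 (0:ℝ)) (𝓝 |(0:ℝ)|) :=
        continuous_abs.tendsto 0
      rw [abs_zero] at h0
      exact h0.mono_left nhdsWithin_le_nhds
    · filter_upwards [self_mem_nhdsWithin] with u hu
      exact abs_pos.2 hu
  have h2 : Tendsto (fun x : ℝ => x ^ (-(1:ℝ)/2)) (𝓝[>] 0) atTop := by
    have h3 : Tendsto (fun x : ℝ => (x⁻¹) ^ ((1:ℝ)/2)) (𝓝[>] 0) atTop :=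
      (tendsto_rpow_atTop (by norm_num : (0:ℝ) < 1/2)).comp tendsto_inv_nhdsGT_zero
    refine h3.congr' ?_
    filter_upwards [self_mem_nhdsWithin] with x hx
    rw [← Real.rpow_neg_one x, ← Real.rpow_mul (le_of_lt hx)]
    norm_num
  have h4 : Tendsto (fun u : ℝ => |u| ^ (-(1:ℝ)/2)) (𝓝[≠] 0) atTop := h2.comp h1
  exact h4.const_mul_atTop (by norm_num)
end
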